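/- arXiv:2005.07911 — 2 statements merged into one kernel-verified Lean document; each statement's English description precedes it below -/
import Mathlib

section
/- Let p ∈ ℕ^n, let H̄_0^p = {h ∈ C([0,1], Λ_0^p) : h(0) = 0, h(1) = w_0 − v_0}, and let d̄_0^p = inf_{h ∈ H̄_0^p} max_{θ ∈ [0,1]} I_0^p(h(θ)). Then d_0^p = d̄_0^p; that is, the minimax over paths constrained to G_0^p equals the classical mountain pass minimax over all paths in Λ_0^p joining 0 to w_0 − v_0. -/
open Filter Topology

namespace FK

noncomputable section

abbrev Zn (n : ℕ) := Fin n → ℤ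

variable {n : ℕ}

/-- the ℓ¹ norm `‖i‖ = ∑ |i_j|` on `ℤⁿ` -/
def znorm (i : Zn n) : ℕ := ∑ j, (i j).natAbs

/-- the finite ball `{j : ‖j - i‖ ≤ r}` as a `Finset` -/
def ball (r : ℕ) (i : Zn n) : Finset (Zn n) :=
  (Finset.Icc (fun m => i m - (r : ℤ)) (fun m => i m + (r : ℤ))).filter fun j => znorm (j - i) ≤ r

/-- the shift `(shift j u) i = u (i + j)`, i.e. `τ_{-jₙ}ⁿ ⋯ τ_{-j₁}¹ u` -/
def shift (j : Zn n) (u : Zn n → ℝ) : Zn n → ℝ := fun i => u (i + j)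

/-- the local potential `S_j(u) = s(τ_{-j} u)` -/
def Spot (s : (Zn n → ℝ) → ℝ) (j : Zn n) (u : Zn n → ℝ) : ℝ := s (shift j u)

/-- partial derivative `∂_i F(u)` of a functional `F` with respect to the coordinate `u(i)` -/
def pd (F : (Zn n → ℝ) → ℝ) (i : Zn n) (u : Zn n → ℝ) : ℝ :=
  deriv (fun t => F (Function.update u i t)) (u i)

/-- second partial derivative `∂_{i,k} F(u)` -/
def pd2 (F : (Zn n → ℝ) → ℝ) (i k : Zn n) (u : Zn n → ℝ) : ℝ :=
  pd (fun w => pd F k w) i u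

/-- the gradient field `W(u)(i) = ∑_{j : ‖j-i‖ ≤ r} ∂_i S_j(u)` -/
def grad (r : ℕ) (s : (Zn n → ℝ) → ℝ) (u : Zn n → ℝ) : Zn n → ℝ :=
  fun i => ∑ j ∈ ball r i, pd (Spot s j) i u

/-- `u` is a solution of the Euler–Lagrange equation (EL):
`∑_{j : ‖j-i‖ ≤ r} ∂_i S_j(u) = 0` for all `i` -/
def IsSolution (r : ℕ) (s : (Zn n → ℝ) → ℝ) (u : Zn n → ℝ) : Prop :=
  ∀ i, grad r s u i = 0

/-- the standard basis vector `e_m` -/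
def unitv (m : Fin n) : Zn n := fun m' => if m' = m then 1 else 0

/-- the first standard basis vector `e₁` -/
def e1v : Zn n := fun m => if (m : ℕ) = 0 then 1 else 0

/-- `u` has period `p m` in the `m`-th coordinate direction, for every `m` -/
def Periodic (p : Fin n → ℕ) (u : Zn n → ℝ) : Prop :=
  ∀ (i : Zn n) (m : Fin n), u (i + (p m : ℤ) • unitv m) = u i

/-- `u` is `1`-periodic in every coordinate direction -/
def PeriodicAll (u : Zn n → ℝ) : Prop := Periodic (fun _ => 1) u

/-- `J_0(u) = S_0(u)` -/
def J0 (s : (Zn n → ℝ) → ℝ) (u : Zn n → ℝ) : ℝ := Spot s 0 u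

/-- `c_0 = inf J_0` over fully periodic configurations -/
def c0 (s : (Zn n → ℝ) → ℝ) : ℝ := sInf {y | ∃ u, PeriodicAll u ∧ J0 s u = y}

/-- `M_0`, the set of fully periodic minimizers of `J_0` -/
def M0 (s : (Zn n → ℝ) → ℝ) : Set (Zn n → ℝ) := {u | PeriodicAll u ∧ J0 s u = c0 s}

/-- the fundamental domain `T_0^p = ∏_j {0, …, p_j - 1}` -/
def Tbox (p : Fin n → ℕ) : Finset (Zn n) :=
  Finset.Icc 0 fun m => (p m : ℤ) - 1

/-- `J_0^p(u) = ∑_{j ∈ T_0^p} S_j(u)` -/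
def J0p (s : (Zn n → ℝ) → ℝ) (p : Fin n → ℕ) (u : Zn n → ℝ) : ℝ :=
  ∑ j ∈ Tbox p, Spot s j u

/-- `c_0^p = inf J_0^p` over `Λ_0^p` -/
def c0p (s : (Zn n → ℝ) → ℝ) (p : Fin n → ℕ) : ℝ :=
  sInf {y | ∃ u, Periodic p u ∧ J0p s p u = y}

/-- `I_0^p(u) = J_0^p(u + v_0)` -/
def I0p (s : (Zn n → ℝ) → ℝ) (p : Fin n → ℕ) (v0 u : Zn n → ℝ) : ℝ :=
  J0p s p (u + v0)

/-- the norm `‖u‖_{Λ_0^p} = (∑_{j ∈ T_0^p} |u(j)|²)^{1/2}` -/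
def lamNorm (p : Fin n → ℕ) (u : Zn n → ℝ) : ℝ :=
  Real.sqrt (∑ j ∈ Tbox p, (u j) ^ 2)

/-- `G_0^p = {u ∈ Λ_0^p : 0 ≤ u ≤ w_0 - v_0}` -/
def G0 (p : Fin n → ℕ) (v0 w0 : Zn n → ℝ) : Set (Zn n → ℝ) :=
  {u | Periodic p u ∧ 0 ≤ u ∧ u ≤ w0 - v0}

/-- the isometric identification of `Λ_0^p` with the euclidean space `ℝ^{T_0^p}` -/
def toEuc (p : Fin n → ℕ) (u : Zn n → ℝ) : EuclideanSpace ℝ (Tbox (n := n) p) :=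
  WithLp.toLp 2 (fun j => u j.1)

/-- inverse of `toEuc`: extend values on `T_0^p` `p`-periodically -/
def extendP (p : Fin n → ℕ) (x : EuclideanSpace ℝ (Tbox (n := n) p)) : Zn n → ℝ :=
  fun i => if h : (fun m => i m % (p m : ℤ)) ∈ Tbox p then x ⟨_, h⟩ else 0

/-- `I_0^p` read through the identification of `Λ_0^p` with euclidean space -/
def I0euc (s : (Zn n → ℝ) → ℝ) (p : Fin n → ℕ) (v0 : Zn n → ℝ) :
    EuclideanSpace ℝ (Tbox (n := n) p) → ℝ :=
  fun x => I0p s p v0 (extendP p x)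

/-- `(I_0^p)'(u) = 0`: vanishing of the Fréchet derivative of `I_0^p` at `u`, computed through
the isometric identification of `Λ_0^p` with euclidean space -/
def IsCrit0 (s : (Zn n → ℝ) → ℝ) (p : Fin n → ℕ) (v0 : Zn n → ℝ) (u : Zn n → ℝ) : Prop :=
  fderiv ℝ (I0euc s p v0) (toEuc p u) = 0

/-- membership in `H_0^p`: a norm-continuous path in `G_0^p` from `0` to `w_0 - v_0` -/
def PathIn (p : Fin n → ℕ) (v0 w0 : Zn n → ℝ) (h : ℝ → Zn n → ℝ) : Prop :=
  ContinuousOn (fun θ => toEuc p (h θ)) (Set.Icc 0 1) ∧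
  (∀ θ ∈ Set.Icc (0 : ℝ) 1, h θ ∈ G0 p v0 w0) ∧
  h 0 = 0 ∧ h 1 = w0 - v0

/-- the mountain pass level `d_0^p = inf_{h ∈ H_0^p} max_{θ ∈ [0,1]} I_0^p(h(θ))` -/
def d0p (s : (Zn n → ℝ) → ℝ) (p : Fin n → ℕ) (v0 w0 : Zn n → ℝ) : ℝ :=
  sInf {y | ∃ h, PathIn p v0 w0 h ∧
    y = sSup ((fun θ => I0p s p v0 (h θ)) '' Set.Icc 0 1)}

/-- `Φ` is the (negative gradient) semiflow of `I_0^p` on `Λ_0^p`: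
`-∂_t Φ_t(u)(i) = ∑_{j : ‖j-i‖ ≤ r} ∂_i S_j(Φ_t(u) + v_0)`, `Φ_0(u) = u` -/
def IsFlow (r : ℕ) (s : (Zn n → ℝ) → ℝ) (p : Fin n → ℕ) (v0 : Zn n → ℝ)
    (Φ : ℝ → (Zn n → ℝ) → (Zn n → ℝ)) : Prop :=
  (∀ u, Periodic p u → ∀ t, Periodic p (Φ t u)) ∧
  (∀ u, Φ 0 u = u) ∧
  (∀ u, Periodic p u → ∀ i, ∀ t ∈ Set.Ici (0 : ℝ),
    HasDerivWithinAt (fun τ => Φ τ u i) (-(grad r s (Φ t u + v0) i)) (Set.Ici 0) t)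

/-- `p(k) = (k, 1, …, 1)` -/
def pk (n k : ℕ) : Fin n → ℕ := fun m => if (m : ℕ) = 0 then k else 1

/-- `u` touches `v` from below -/
def TouchesBelow (u v : Zn n → ℝ) : Prop := u ≤ v ∧ u ≠ v ∧ ∃ i, u i = v i

/-- `θ̲_t = sup {θ ∈ [0,1] : Φ_t(h(θ)) ≤ u₀, Φ_t(h(θ)) ≠ u₀}` -/
def thetaLow (Φ : ℝ → (Zn n → ℝ) → (Zn n → ℝ)) (h : ℝ → Zn n → ℝ) (u0 : Zn n → ℝ)
    (t : ℝ) : ℝ :=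
  sSup {θ | θ ∈ Set.Icc (0 : ℝ) 1 ∧ Φ t (h θ) ≤ u0 ∧ Φ t (h θ) ≠ u0}

/-- `θ̄_t = inf {θ ∈ [0,1] : Φ_t(h(θ)) ≥ u₀, Φ_t(h(θ)) ≠ u₀}` -/
def thetaHigh (Φ : ℝ → (Zn n → ℝ) → (Zn n → ℝ)) (h : ℝ → Zn n → ℝ) (u0 : Zn n → ℝ)
    (t : ℝ) : ℝ :=
  sInf {θ | θ ∈ Set.Icc (0 : ℝ) 1 ∧ u0 ≤ Φ t (h θ) ∧ Φ t (h θ) ≠ u0}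

/-- `s` read through the identification of `ℝ^{B_0^r}` with euclidean space (used to state that
`s ∈ C²(ℝ^{B_0^r}, ℝ)`) -/
def sEuc (r : ℕ) (s : (Zn n → ℝ) → ℝ) : EuclideanSpace ℝ (ball r (0 : Zn n)) → ℝ :=
  fun x => s fun i => if h : i ∈ ball r (0 : Zn n) then x ⟨i, h⟩ else 0

/-- The standing assumptions on the generalized Frenkel–Kontorova model: `s ∈ C²(ℝ^{B_0^r}, ℝ)`
(encoded by `localized` and `smooth`) satisfying (S1)–(S4). -/
structure Setup (n r : ℕ) : Type where
  /-- the local potential -/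
  s : (Zn n → ℝ) → ℝ
  npos : 0 < n
  /-- `s` only depends on the coordinates in `B_0^r` -/
  localized : ∀ u v : Zn n → ℝ, (∀ k, znorm k ≤ r → u k = v k) → s u = s v
  /-- `s` is `C²` -/
  smooth : ContDiff ℝ 2 (sEuc r s)
  /-- (S1): periodicity -/
  S1 : ∀ u : Zn n → ℝ, s (fun i => u i + 1) = s u
  /-- (S2): bounded below -/
  S2_bddBelow : ∃ b : ℝ, ∀ u, b ≤ s u
  /-- (S2): coercivity -/
  S2_coercive : ∀ k j : Zn n, znorm k ≤ r → znorm j ≤ r → znorm (k - j) = 1 →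
    ∀ M : ℝ, ∃ R : ℝ, ∀ u : Zn n → ℝ, R ≤ |u k - u j| → M ≤ s u
  /-- (S3): off-diagonal second partials nonpositive -/
  S3 : ∀ k j : Zn n, znorm k ≤ r → znorm j ≤ r → k ≠ j → ∀ u, pd2 s k j u ≤ 0
  /-- (S3): strict negativity for nearest neighbours of `0` -/
  S3' : ∀ j : Zn n, znorm j = 1 → ∀ u, pd2 s 0 j u < 0
  /-- the constant of (S4) -/
  C : ℝ
  /-- (S4): uniformly bounded second partials -/
  S4 : ∀ i k : Zn n, znorm i ≤ r → znorm k ≤ r → ∀ u, |pd2 s i k u| ≤ C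

/-- 1-periodicity in the directions `e_2, …, e_n` with periods `q` -/
def Periodic1 (q : Fin n → ℕ) (u : Zn n → ℝ) : Prop :=
  ∀ (i : Zn n) (m : Fin n), 1 ≤ (m : ℕ) → u (i + (q m : ℤ) • unitv m) = u i

/-- the slab `{i} × T_1^q` as a `Finset` -/
def slab (q : Fin n → ℕ) (i : ℤ) : Finset (Zn n) :=
  Finset.Icc (fun m => if (m : ℕ) = 0 then i else 0)
    (fun m => if (m : ℕ) = 0 then i else (q m : ℤ) - 1)

/-- membership in `Λ_1^q` -/
def MemLam1 (q : Fin n → ℕ) (u : Zn n → ℝ) : Prop :=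
  Periodic1 q u ∧ Summable fun i : ℤ => ∑ j ∈ slab q i, |u j|

/-- the norm `‖u‖_{Λ_1^q} = ∑_{ℤ × T_1^q} |u(j)| + (∑_{ℤ × T_1^q} |u(j)|²)^{1/2}` -/
def lamNorm1 (q : Fin n → ℕ) (u : Zn n → ℝ) : ℝ :=
  (∑' i : ℤ, ∑ j ∈ slab q i, |u j|) + Real.sqrt (∑' i : ℤ, ∑ j ∈ slab q i, (u j) ^ 2)

/-- `J_1(u) = liminf_{p → -∞, q → ∞} ∑_{i=p}^q [J_0(τ^1_{-i} u) - c_0]` -/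
def J1 (s : (Zn n → ℝ) → ℝ) (u : Zn n → ℝ) : ℝ :=
  liminf (fun pq : ℤ × ℤ => ∑ i ∈ Finset.Icc pq.1 pq.2, (Spot s (i • e1v) u - c0 s))
    (atBot ×ˢ atTop)

/-- the class `Γ_1(v_0, w_0)` of heteroclinic configurations from `v_0` to `w_0` -/
def Gamma1 (v0 w0 : Zn n → ℝ) : Set (Zn n → ℝ) :=
  {u | Periodic1 (fun _ => 1) u ∧ v0 ≤ u ∧ u ≤ w0 ∧
    Tendsto (fun i : ℤ => u (i • e1v) - v0 (i • e1v)) atBot (nhds 0) ∧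
    Tendsto (fun i : ℤ => u (i • e1v) - w0 (i • e1v)) atTop (nhds 0)}

/-- `c_1(v_0, w_0) = inf_{Γ_1(v_0,w_0)} J_1` -/
def c1 (s : (Zn n → ℝ) → ℝ) (v0 w0 : Zn n → ℝ) : ℝ :=
  sInf {y | ∃ u ∈ Gamma1 v0 w0, J1 s u = y}

/-- `M_1(v_0, w_0)`, the minimizers of `J_1` on `Γ_1(v_0, w_0)` -/
def M1 (s : (Zn n → ℝ) → ℝ) (v0 w0 : Zn n → ℝ) : Set (Zn n → ℝ) :=
  {u | u ∈ Gamma1 v0 w0 ∧ J1 s u = c1 s v0 w0}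

/-- `I_1^q(u) = liminf_{p → -∞, q' → ∞} ∑_{i=p}^{q'} ∑_{j ∈ {i} × T_1^q} [S_j(u + v_1) - c_0]` -/
def I1q (s : (Zn n → ℝ) → ℝ) (v1 : Zn n → ℝ) (q : Fin n → ℕ) (u : Zn n → ℝ) : ℝ :=
  liminf (fun pq : ℤ × ℤ =>
      ∑ i ∈ Finset.Icc pq.1 pq.2, ∑ j ∈ slab q i, (Spot s j (u + v1) - c0 s))
    (atBot ×ˢ atTop)

/-- the pairing `(I_1^q)'(u) v = ∑_{i ∈ ℤ} ∑_{j ∈ {i} × T_1^q} v(j) ∑_{k : ‖k-j‖ ≤ r} ∂_j S_k(u + v_1)` -/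
def pair1 (r : ℕ) (s : (Zn n → ℝ) → ℝ) (v1 : Zn n → ℝ) (q : Fin n → ℕ)
    (u v : Zn n → ℝ) : ℝ :=
  ∑' i : ℤ, ∑ j ∈ slab q i, v j * grad r s (u + v1) j

/-- `(I_1^q)'(u) = 0` -/
def IsCrit1 (r : ℕ) (s : (Zn n → ℝ) → ℝ) (v1 : Zn n → ℝ) (q : Fin n → ℕ)
    (u : Zn n → ℝ) : Prop :=
  ∀ v, MemLam1 q v → pair1 r s v1 q u v = 0

/-- `G_1^q = {u ∈ Λ_1^q : 0 ≤ u ≤ w_1 - v_1}` -/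
def G1 (q : Fin n → ℕ) (v1 w1 : Zn n → ℝ) : Set (Zn n → ℝ) :=
  {u | MemLam1 q u ∧ 0 ≤ u ∧ u ≤ w1 - v1}

/-- membership in `H_1^q`: a `‖·‖_{Λ_1^q}`-continuous path in `G_1^q` from `0` to `w_1 - v_1` -/
def Path1 (q : Fin n → ℕ) (v1 w1 : Zn n → ℝ) (h : ℝ → Zn n → ℝ) : Prop :=
  (∀ θ ∈ Set.Icc (0 : ℝ) 1, h θ ∈ G1 q v1 w1) ∧ h 0 = 0 ∧ h 1 = w1 - v1 ∧
  ∀ θ ∈ Set.Icc (0 : ℝ) 1, ∀ ε > (0 : ℝ), ∃ δ > (0 : ℝ), ∀ θ' ∈ Set.Icc (0 : ℝ) 1,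
    |θ' - θ| ≤ δ → lamNorm1 q (h θ' - h θ) ≤ ε

/-- the heteroclinic mountain pass level `d_1^q` -/
def d1q (s : (Zn n → ℝ) → ℝ) (v1 w1 : Zn n → ℝ) (q : Fin n → ℕ) : ℝ :=
  sInf {y | ∃ h, Path1 q v1 w1 h ∧
    y = sSup ((fun θ => I1q s v1 q (h θ)) '' Set.Icc 0 1)}

/-- `q(k) = (k, 1, …, 1) ∈ ℕ^{n-1}` (indexed by the directions `e_2, …, e_n`) -/
def qk (n k : ℕ) : Fin n → ℕ := fun m => if (m : ℕ) = 1 then k else 1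

/-! ## Auxiliary lemmas -/

section Aux

variable {n r : ℕ}

lemma mem_ball_iff {k : Zn n} : k ∈ ball r (0 : Zn n) ↔ znorm k ≤ r := by
  constructor
  · intro hk
    have h2 := (Finset.mem_filter.mp hk).2
    rwa [show k - 0 = k from sub_zero k] at h2
  · intro hk
    have hb : ∀ m, |k m| ≤ (r : ℤ) := by
      intro m
      have h1 : (k m).natAbs ≤ r := le_trans (Finset.single_le_sum
        (f := fun j => (k j).natAbs) (fun _ _ => Nat.zero_le _) (Finset.mem_univ m)) hk
      rw [Int.abs_eq_natAbs]
      exact_mod_cast h1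
    refine Finset.mem_filter.mpr ⟨Finset.mem_Icc.mpr ⟨fun m => ?_, fun m => ?_⟩,
      by rwa [show k - 0 = k from sub_zero k]⟩
    · show (0 : Zn n) m - (r : ℤ) ≤ k m
      have := abs_le.mp (hb m)
      simp only [Pi.zero_apply, zero_sub]
      omega
    · show k m ≤ (0 : Zn n) m + (r : ℤ)
      have := abs_le.mp (hb m)
      simp only [Pi.zero_apply, zero_add]
      omega

end Aux
section Aux2

variable {n : ℕ} {p : Fin n → ℕ}

/-- reduction mod `p` -/
def rho (p : Fin n → ℕ) (i : Zn n) : Zn n := fun m => i m % (p m : ℤ)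

lemma mem_Tbox_iff {j : Zn n} : j ∈ Tbox p ↔ ∀ m, 0 ≤ j m ∧ j m ≤ (p m : ℤ) - 1 := by
  constructor
  · intro hj m
    obtain ⟨h1, h2⟩ := Finset.mem_Icc.mp hj
    exact ⟨h1 m, h2 m⟩
  · intro hj
    exact Finset.mem_Icc.mpr ⟨fun m => (hj m).1, fun m => (hj m).2⟩

lemma rho_mem_Tbox (hp : ∀ m, 1 ≤ p m) (i : Zn n) : rho p i ∈ Tbox p := by
  refine mem_Tbox_iff.mpr fun m => ?_
  show 0 ≤ i m % (p m : ℤ) ∧ i m % (p m : ℤ) ≤ (p m : ℤ) - 1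
  have hpm : (0 : ℤ) < (p m : ℤ) := by exact_mod_cast hp m
  have h1 := Int.emod_nonneg (i m) hpm.ne'
  have h2 := Int.emod_lt_of_pos (i m) hpm
  exact ⟨h1, by omega⟩

lemma rho_eq_self {j : Zn n} (hj : j ∈ Tbox p) : rho p j = j := by
  funext m
  obtain ⟨h0, h1⟩ := (mem_Tbox_iff.mp hj) m
  exact Int.emod_eq_of_lt h0 (by omega)

lemma dvd_sub_rho (p : Fin n → ℕ) (i : Zn n) (m : Fin n) :
    ((p m : ℤ)) ∣ (i m - rho p i m) := by
  have h := Int.emod_add_mul_ediv (i m) (p m : ℤ)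
  refine ⟨i m / (p m : ℤ), ?_⟩
  show i m - i m % (p m : ℤ) = _
  omega

lemma periodic_add_dvd {u : Zn n → ℝ} (hu : Periodic p u) (i v : Zn n)
    (hv : ∀ m, ((p m : ℤ)) ∣ v m) :
    u (i + v) = u i := by
  have key : ∀ (m : Fin n) (c : ℤ) (x : Zn n), u (x + (c * (p m : ℤ)) • unitv m) = u x := by
    intro m c
    induction c using Int.induction_on with
    | zero => simp
    | succ c ih =>
      intro x
      have heq : x + (((c : ℤ) + 1) * (p m : ℤ)) • unitv m
          = (x + ((c : ℤ) * (p m : ℤ)) • unitv m) + (p m : ℤ) • unitv m := by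
        rw [add_mul, one_mul, add_smul]; abel
      rw [heq, hu _ m, ih]
    | pred c ih =>
      intro x
      have h1 := hu (x + ((-(c : ℤ) - 1) * (p m : ℤ)) • unitv m) m
      have h2 : x + ((-(c : ℤ) - 1) * (p m : ℤ)) • unitv m + (p m : ℤ) • unitv m
          = x + ((-(c : ℤ)) * (p m : ℤ)) • unitv m := by
        rw [add_assoc, ← add_smul]
        congr 2
        ring
      rw [h2] at h1
      exact h1.symm.trans (ih x)
  have sum_eq : ∀ s : Finset (Fin n), u (i + ∑ m ∈ s, v m • unitv m) = u i := by
    intro s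
    induction s using Finset.induction_on with
    | empty => simp
    | @insert m s' hm ih =>
      obtain ⟨c, hc⟩ := hv m
      rw [Finset.sum_insert hm]
      have heq : i + (v m • unitv m + ∑ x ∈ s', v x • unitv x)
          = (i + ∑ x ∈ s', v x • unitv x) + (c * (p m : ℤ)) • unitv m := by
        rw [hc, mul_comm]; abel
      rw [heq, key, ih]
  have hv' : v = ∑ m, v m • unitv m := by
    funext m'
    rw [Finset.sum_apply]
    simp only [Pi.smul_apply, unitv, smul_eq_mul]
    rw [Finset.sum_eq_single m'] <;> simp +contextual [eq_comm]
  calc u (i + v) = u (i + ∑ m, v m • unitv m) := by rw [← hv']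
    _ = u i := sum_eq _

lemma periodic_rho {u : Zn n → ℝ} (hu : Periodic p u) (i : Zn n) :
    u i = u (rho p i) := by
  have h := periodic_add_dvd hu (rho p i) (i - rho p i)
    (fun m => by simpa using dvd_sub_rho p i m)
  rw [show rho p i + (i - rho p i) = i by abel] at h
  exact h

lemma shift_rho {u : Zn n → ℝ} (hu : Periodic p u) (m : Zn n) :
    shift m u = shift (rho p m) u := by
  funext i
  show u (i + m) = u (i + rho p m)
  have h := periodic_add_dvd hu (i + rho p m) (m - rho p m)
    (fun m' => by simpa using dvd_sub_rho p m m')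
  rw [show i + rho p m + (m - rho p m) = i + m by abel] at h
  exact h

lemma periodic_shift {u : Zn n → ℝ} (hu : Periodic p u) (j : Zn n) :
    Periodic p (shift j u) := by
  intro i m
  show u (i + (p m : ℤ) • unitv m + j) = u (i + j)
  rw [show i + (p m : ℤ) • unitv m + j = i + j + (p m : ℤ) • unitv m by abel]
  exact hu (i + j) m

lemma periodic_const (c : ℝ) : Periodic p (fun _ => c) := fun _ _ => rfl

lemma periodic_inf {u v : Zn n → ℝ} (hu : Periodic p u) (hv : Periodic p v) :
    Periodic p (u ⊓ v) := by
  intro i m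
  show min _ _ = min _ _
  rw [hu i m, hv i m]

lemma periodic_sup {u v : Zn n → ℝ} (hu : Periodic p u) (hv : Periodic p v) :
    Periodic p (u ⊔ v) := by
  intro i m
  show max _ _ = max _ _
  rw [hu i m, hv i m]

lemma periodic_add {u v : Zn n → ℝ} (hu : Periodic p u) (hv : Periodic p v) :
    Periodic p (u + v) := by
  intro i m
  show u _ + v _ = u _ + v _
  rw [hu i m, hv i m]

lemma periodicAll_const {u : Zn n → ℝ} (hu : PeriodicAll u) (i : Zn n) : u i = u 0 := by
  have h : u (0 + i) = u 0 := periodic_add_dvd hu 0 i (fun m => one_dvd _)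
  simpa using h

/-- the key bijection: `j ↦ rho p (j + k)` permutes `Tbox p` (at multiset level) -/
lemma map_val_rho_add (hp : ∀ m, 1 ≤ p m) (k : Zn n) :
    (Tbox p).val.map (fun j => rho p (j + k)) = (Tbox p).val := by
  have hinj : Set.InjOn (fun j => rho p (j + k)) (Tbox p : Set (Zn n)) := by
    intro j hj j' hj' hjj
    funext m
    have h1 := congrFun hjj m
    simp only [rho, Pi.add_apply] at h1
    have hd : ((p m : ℤ)) ∣ ((j m + k m) - (j' m + k m)) :=
      Int.dvd_of_emod_eq_zero (Int.emod_eq_emod_iff_emod_sub_eq_zero.mp h1)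
    have hb := (mem_Tbox_iff.mp (Finset.mem_coe.mp hj)) m
    have hb' := (mem_Tbox_iff.mp (Finset.mem_coe.mp hj')) m
    have hpm : (1 : ℤ) ≤ (p m : ℤ) := by exact_mod_cast hp m
    have hz : j m - j' m = 0 := by
      refine Int.eq_zero_of_abs_lt_dvd (by simpa using hd) ?_
      rw [abs_lt]
      omega
    omega
  have hsub : Finset.image (fun j => rho p (j + k)) (Tbox p) = Tbox p := by
    apply Finset.eq_of_subset_of_card_le
    · intro x hx
      obtain ⟨j, _, rfl⟩ := Finset.mem_image.mp hx
      exact rho_mem_Tbox hp _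
    · rw [Finset.card_image_of_injOn hinj]
  calc (Tbox p).val.map (fun j => rho p (j + k))
      = (Finset.image (fun j => rho p (j + k)) (Tbox p)).val :=
        (Finset.image_val_of_injOn hinj).symm
    _ = (Tbox p).val := by rw [hsub]

end Aux2
section Aux3

variable {n r : ℕ} (P : Setup n r)

/-- restriction of a configuration to the ball `B_0^r`, as a euclidean vector -/
def restrictB (r : ℕ) (u : Zn n → ℝ) : EuclideanSpace ℝ (ball r (0 : Zn n)) :=
  WithLp.toLp 2 (fun j => u j.1)

/-- extension by `0` -/
def extendB (r : ℕ) (x : EuclideanSpace ℝ (ball r (0 : Zn n))) : Zn n → ℝ :=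
  fun i => if h : i ∈ ball r (0 : Zn n) then x ⟨i, h⟩ else 0

lemma restrictB_extendB (x : EuclideanSpace ℝ (ball r (0 : Zn n))) :
    restrictB r (extendB r x) = x := by
  ext j
  simp [restrictB, extendB, j.2]

lemma s_eq_sEuc (u : Zn n → ℝ) : P.s u = sEuc r P.s (restrictB r u) := by
  refine (P.localized _ u fun k hk => ?_).symm
  rw [dif_pos (mem_ball_iff.mpr hk)]
  rfl

lemma restrictB_update (u : Zn n → ℝ) {k : Zn n} (hk : k ∈ ball r (0 : Zn n)) (t : ℝ) :
    restrictB r (Function.update u k t) = WithLp.toLp 2 (Function.update (restrictB r u).ofLp ⟨k, hk⟩ t) := by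
  ext j
  show Function.update u k t j.1 = Function.update (restrictB r u).ofLp ⟨k, hk⟩ t j
  rw [Function.update_apply, Function.update_apply]
  by_cases hj : j = ⟨k, hk⟩
  · simp [hj]
  · have : j.1 ≠ k := fun hc => hj (Subtype.ext hc)
    simp [hj, this]
    rfl

lemma update_line {ι : Type*} [Fintype ι] [DecidableEq ι]
    (x : EuclideanSpace ℝ ι) (j : ι) (t : ℝ) :
    (WithLp.toLp 2 (Function.update x.ofLp j t) : EuclideanSpace ℝ ι)
      = x + (t - x j) • EuclideanSpace.single j (1 : ℝ) := by
  ext i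
  by_cases hij : i = j
  · subst hij
    simp [Function.update_self]
  · simp [Function.update_apply, hij, EuclideanSpace.single_apply]

lemma lineDerivF (F : EuclideanSpace ℝ (ball r (0 : Zn n)) → ℝ)
    (hF : Differentiable ℝ F) (c v : EuclideanSpace ℝ (ball r (0 : Zn n))) (a t : ℝ) :
    HasDerivAt (fun t => F (c + (t - a) • v)) (fderiv ℝ F (c + (t - a) • v) v) t := by
  have hl : HasDerivAt (fun t : ℝ => c + (t - a) • v) v t := by
    simpa using (((hasDerivAt_id t).sub_const a).smul_const v).const_add c
  exact (hF _).hasFDerivAt.comp_hasDerivAt t hl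

lemma lineDerivF2 (F : EuclideanSpace ℝ (ball r (0 : Zn n)) → ℝ)
    (hG : Differentiable ℝ (fderiv ℝ F))
    (c v w : EuclideanSpace ℝ (ball r (0 : Zn n))) (a t : ℝ) :
    HasDerivAt (fun t => fderiv ℝ F (c + (t - a) • v) w)
      (fderiv ℝ (fderiv ℝ F) (c + (t - a) • v) v w) t := by
  have hl : HasDerivAt (fun t : ℝ => c + (t - a) • v) v t := by
    simpa using (((hasDerivAt_id t).sub_const a).smul_const v).const_add c
  have h1 := (hG _).hasFDerivAt.comp_hasDerivAt t hl
  have h2 := (ContinuousLinearMap.apply ℝ ℝ w).hasFDerivAt.comp_hasDerivAt t h1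
  exact h2

lemma pd_eq_fderiv (u : Zn n → ℝ) {k : Zn n} (hk : k ∈ ball r (0 : Zn n)) :
    pd P.s k u = fderiv ℝ (sEuc r P.s) (restrictB r u)
      (EuclideanSpace.single ⟨k, hk⟩ (1 : ℝ)) := by
  classical
  have hFdiff : Differentiable ℝ (sEuc r P.s) := P.smooth.differentiable (by norm_num)
  set x := restrictB r u with hx
  set v := EuclideanSpace.single (⟨k, hk⟩ : (ball r (0 : Zn n) : Finset (Zn n))) (1 : ℝ) with hv
  have heq : (fun t => P.s (Function.update u k t))
      = fun t => sEuc r P.s (x + (t - x ⟨k, hk⟩) • v) := by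
    funext t
    rw [s_eq_sEuc P, restrictB_update u hk, update_line]
  have hder := lineDerivF (sEuc r P.s) hFdiff x v (x ⟨k, hk⟩) (x ⟨k, hk⟩)
  rw [show (x ⟨k, hk⟩ - x ⟨k, hk⟩) • v = (0 : EuclideanSpace ℝ (ball r (0 : Zn n))) from by
    rw [sub_self, zero_smul], add_zero] at hder
  rw [pd, heq, show u k = x ⟨k, hk⟩ from rfl]
  exact hder.deriv

lemma pd2_eq_fderiv2 (u : Zn n → ℝ) {j k : Zn n}
    (hj : j ∈ ball r (0 : Zn n)) (hk : k ∈ ball r (0 : Zn n)) :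
    pd2 P.s j k u = fderiv ℝ (fderiv ℝ (sEuc r P.s)) (restrictB r u)
      (EuclideanSpace.single ⟨j, hj⟩ (1 : ℝ)) (EuclideanSpace.single ⟨k, hk⟩ (1 : ℝ)) := by
  classical
  have hGdiff : Differentiable ℝ (fderiv ℝ (sEuc r P.s)) :=
    (P.smooth.fderiv_right (m := 1) (by norm_num)).differentiable (by norm_num)
  set x := restrictB r u with hx
  set vj := EuclideanSpace.single (⟨j, hj⟩ : (ball r (0 : Zn n) : Finset (Zn n))) (1 : ℝ) with hvj
  set vk := EuclideanSpace.single (⟨k, hk⟩ : (ball r (0 : Zn n) : Finset (Zn n))) (1 : ℝ) with hvk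
  have heq : (fun t => pd P.s k (Function.update u j t))
      = fun t => fderiv ℝ (sEuc r P.s) (x + (t - x ⟨j, hj⟩) • vj) vk := by
    funext t
    rw [pd_eq_fderiv P _ hk, restrictB_update u hj, update_line]
  have hder := lineDerivF2 (sEuc r P.s) hGdiff x vj vk (x ⟨j, hj⟩) (x ⟨j, hj⟩)
  rw [show (x ⟨j, hj⟩ - x ⟨j, hj⟩) • vj = (0 : EuclideanSpace ℝ (ball r (0 : Zn n))) from by
    rw [sub_self, zero_smul], add_zero] at hder
  rw [pd2, pd, heq, show u j = x ⟨j, hj⟩ from rfl]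
  exact hder.deriv

/-- euclidean decomposition into coordinates -/
lemma euc_decomp {ι : Type*} [Fintype ι] [DecidableEq ι] (x : EuclideanSpace ℝ ι) :
    x = ∑ i, x i • EuclideanSpace.single i (1 : ℝ) := by
  ext j
  rw [show (∑ i, x i • EuclideanSpace.single i (1 : ℝ)).ofLp j
      = ∑ i, x i * EuclideanSpace.single i (1 : ℝ) j from by
    rw [WithLp.ofLp_sum, Finset.sum_apply]; rfl]
  simp [EuclideanSpace.single_apply]

lemma bilinear_nonpos (x A B : EuclideanSpace ℝ (ball r (0 : Zn n)))
    (hA : ∀ i, 0 ≤ A i) (hB : ∀ i, 0 ≤ B i) (hdisj : ∀ i, A i = 0 ∨ B i = 0) :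
    fderiv ℝ (fderiv ℝ (sEuc r P.s)) x A B ≤ 0 := by
  classical
  set M := fderiv ℝ (fderiv ℝ (sEuc r P.s)) x with hM
  have hsingle : ∀ j k : (ball r (0 : Zn n) : Finset (Zn n)), j ≠ k →
      M (EuclideanSpace.single j 1) (EuclideanSpace.single k 1) ≤ 0 := by
    intro j k hjk
    have hx := restrictB_extendB (r := r) (n := n) x
    have := pd2_eq_fderiv2 P (extendB r x) j.2 k.2
    rw [hx] at this
    rw [hM, ← this]
    exact P.S3 j.1 k.1 (by simpa using mem_ball_iff.mp j.2) (by simpa using mem_ball_iff.mp k.2)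
      (fun hc => hjk (Subtype.ext hc)) _
  have hMA : M A = ∑ j, A j • M (EuclideanSpace.single j 1) := by
    conv_lhs => rw [euc_decomp A]
    rw [map_sum]
    exact Finset.sum_congr rfl fun j _ => by rw [map_smul]
  have hstep : M A B = ∑ j, A j * (M (EuclideanSpace.single j 1) B) := by
    rw [hMA, ContinuousLinearMap.sum_apply]
    exact Finset.sum_congr rfl fun j _ => by
      rw [ContinuousLinearMap.smul_apply, smul_eq_mul]
  have hBexp : ∀ j : (ball r (0 : Zn n) : Finset (Zn n)),
      M (EuclideanSpace.single j 1) B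
        = ∑ k, B k * (M (EuclideanSpace.single j 1) (EuclideanSpace.single k 1)) := by
    intro j
    conv_lhs => rw [euc_decomp B]
    rw [map_sum]
    exact Finset.sum_congr rfl fun k _ => by rw [map_smul, smul_eq_mul]
  rw [hstep]
  refine Finset.sum_nonpos fun j _ => ?_
  rw [hBexp j, Finset.mul_sum]
  refine Finset.sum_nonpos fun k _ => ?_
  by_cases hjk : j = k
  · subst hjk
    rcases hdisj j with h | h <;> simp [h]
  · exact mul_nonpos_of_nonneg_of_nonpos (hA _)
      (mul_nonpos_of_nonneg_of_nonpos (hB _) (hsingle j k hjk))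

/-- submodularity of `s` -/
lemma s_submodular (f g : Zn n → ℝ) :
    P.s (f ⊓ g) + P.s (f ⊔ g) ≤ P.s f + P.s g := by
  classical
  set F := sEuc r P.s with hF
  have hFdiff : Differentiable ℝ F := P.smooth.differentiable (by norm_num)
  have hGdiff : Differentiable ℝ (fderiv ℝ F) :=
    (P.smooth.fderiv_right (m := 1) (by norm_num)).differentiable (by norm_num)
  set x0 := restrictB r (f ⊓ g) with hx0
  set A := restrictB r f - x0 with hA
  set B := restrictB r g - x0 with hB
  have hAnn : ∀ i, 0 ≤ A i := fun i => by
    simp only [hA, hx0, PiLp.sub_apply, restrictB, Pi.inf_apply, sub_nonneg]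
    exact inf_le_left
  have hBnn : ∀ i, 0 ≤ B i := fun i => by
    simp only [hB, hx0, PiLp.sub_apply, restrictB, Pi.inf_apply, sub_nonneg]
    exact inf_le_right
  have hdisj : ∀ i, A i = 0 ∨ B i = 0 := fun i => by
    simp only [hA, hB, hx0, PiLp.sub_apply, restrictB, Pi.inf_apply]
    rcases le_total (f i.1) (g i.1) with h | h
    · left; simp [inf_eq_left.mpr h]
    · right; simp [inf_eq_right.mpr h]
  -- the line derivative lemmas
  have lineDeriv : ∀ (c v : EuclideanSpace ℝ (ball r (0 : Zn n))) (t : ℝ),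
      HasDerivAt (fun t => F (c + t • v)) (fderiv ℝ F (c + t • v) v) t := by
    intro c v t
    have hl : HasDerivAt (fun t : ℝ => c + t • v) v t := by
      simpa using ((hasDerivAt_id t).smul_const v).const_add c
    exact (hFdiff _).hasFDerivAt.comp_hasDerivAt t hl
  have lineDeriv2 : ∀ (c v w : EuclideanSpace ℝ (ball r (0 : Zn n))) (σ : ℝ),
      HasDerivAt (fun σ => fderiv ℝ F (c + σ • v) w)
        (fderiv ℝ (fderiv ℝ F) (c + σ • v) v w) σ := by
    intro c v w σ
    have hl : HasDerivAt (fun σ : ℝ => c + σ • v) v σ := by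
      simpa using ((hasDerivAt_id σ).smul_const v).const_add c
    have h1 := (hGdiff _).hasFDerivAt.comp_hasDerivAt σ hl
    have h2 := (ContinuousLinearMap.apply ℝ ℝ w).hasFDerivAt.comp_hasDerivAt σ h1
    exact h2
  -- χ is antitone
  set χ : ℝ → ℝ := fun t => F (x0 + B + t • A) - F (x0 + t • A) with hχ
  have hχder : ∀ t, HasDerivAt χ
      (fderiv ℝ F (x0 + B + t • A) A - fderiv ℝ F (x0 + t • A) A) t :=
    fun t => (lineDeriv (x0 + B) A t).sub (lineDeriv x0 A t)
  have hχ_nonpos : ∀ t, deriv χ t ≤ 0 := by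
    intro t
    rw [(hχder t).deriv]
    -- η σ = fderiv F (x0 + t•A + σ•B) A is antitone
    set η : ℝ → ℝ := fun σ => fderiv ℝ F ((x0 + t • A) + σ • B) A with hη
    have hηder : ∀ σ, HasDerivAt η
        (fderiv ℝ (fderiv ℝ F) ((x0 + t • A) + σ • B) B A) σ :=
      fun σ => lineDeriv2 (x0 + t • A) B A σ
    have hη_anti : Antitone η := by
      refine antitone_of_deriv_nonpos (fun σ => (hηder σ).differentiableAt) fun σ => ?_
      rw [(hηder σ).deriv]
      exact bilinear_nonpos P _ B A hBnn hAnn (fun i => (hdisj i).symm)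
    have h10 : η 1 ≤ η 0 := hη_anti zero_le_one
    have e1 : η 1 = fderiv ℝ F (x0 + B + t • A) A := by
      show fderiv ℝ F (x0 + t • A + (1 : ℝ) • B) A = _
      rw [one_smul, show x0 + t • A + B = x0 + B + t • A from by abel]
    have e0 : η 0 = fderiv ℝ F (x0 + t • A) A := by
      show fderiv ℝ F (x0 + t • A + (0 : ℝ) • B) A = _
      rw [zero_smul, add_zero]
    rw [e1, e0] at h10
    linarith
  have hχanti : Antitone χ :=
    antitone_of_deriv_nonpos (fun t => (hχder t).differentiableAt) hχ_nonpos
  have h10 : χ 1 ≤ χ 0 := hχanti zero_le_one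
  -- identify values
  have hsup : restrictB r (f ⊔ g) = x0 + A + B := by
    ext i
    simp only [hA, hB, hx0, PiLp.add_apply, PiLp.sub_apply, restrictB, Pi.inf_apply,
      Pi.sup_apply]
    have := max_add_min (f i.1) (g i.1)
    have h2 : f i.1 ⊔ g i.1 = max (f i.1) (g i.1) := rfl
    have h3 : f i.1 ⊓ g i.1 = min (f i.1) (g i.1) := rfl
    rw [h2, h3]
    linarith [max_add_min (f i.1) (g i.1)]
  have hf : restrictB r f = x0 + A := by rw [hA]; abel
  have hg : restrictB r g = x0 + B := by rw [hB]; abel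
  have hv1 : χ 1 = P.s (f ⊔ g) - P.s f := by
    show F (x0 + B + (1 : ℝ) • A) - F (x0 + (1 : ℝ) • A) = _
    rw [one_smul, s_eq_sEuc P (f ⊔ g), s_eq_sEuc P f, hsup, hf,
      show x0 + B + A = x0 + A + B from by abel]
  have hv0 : χ 0 = P.s g - P.s (f ⊓ g) := by
    show F (x0 + B + (0 : ℝ) • A) - F (x0 + (0 : ℝ) • A) = _
    rw [zero_smul, add_zero, s_eq_sEuc P g, s_eq_sEuc P (f ⊓ g), hg, ← hx0]
    simp [hF]
  rw [hv1, hv0] at h10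
  linarith

end Aux3
section Aux4

variable {n r : ℕ} (P : Setup n r) {p : Fin n → ℕ}

lemma shift_zero (u : Zn n → ℝ) : shift (0 : Zn n) u = u := by
  funext i; simp [shift]

lemma shift_shift (j k : Zn n) (u : Zn n → ℝ) :
    shift j (shift k u) = shift (j + k) u := by
  funext i; simp [shift, add_assoc]

lemma shift_const (j : Zn n) (c : ℝ) : shift j (fun _ => c) = fun _ => c := rfl

lemma shift_inf (j : Zn n) (u v : Zn n → ℝ) : shift j (u ⊓ v) = shift j u ⊓ shift j v := rfl

lemma shift_sup (j : Zn n) (u v : Zn n → ℝ) : shift j (u ⊔ v) = shift j u ⊔ shift j v := rfl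

lemma c0_le (u : Zn n → ℝ) (hu : PeriodicAll u) : c0 P.s ≤ P.s u := by
  obtain ⟨b, hb⟩ := P.S2_bddBelow
  have hmem : P.s u ∈ {y | ∃ u, PeriodicAll u ∧ J0 P.s u = y} := by
    exact ⟨u, hu, by rw [J0, Spot, shift_zero]⟩
  refine csInf_le ⟨b, fun y hy => ?_⟩ hmem
  obtain ⟨v, _, rfl⟩ := hy
  rw [J0, Spot]
  exact hb _

lemma s_v0_eq {v0 : Zn n → ℝ} (hv0 : v0 ∈ M0 P.s) : P.s v0 = c0 P.s := by
  have := hv0.2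
  rwa [J0, Spot, shift_zero] at this

/-- `J0p` of a translate -/
lemma J0p_shift (hp : ∀ m, 1 ≤ p m) {u : Zn n → ℝ} (hu : Periodic p u) (k : Zn n) :
    J0p P.s p (shift k u) = J0p P.s p u := by
  have hterm : ∀ j : Zn n, Spot P.s j (shift k u) = P.s (shift (rho p (j + k)) u) := by
    intro j
    rw [Spot, shift_shift, ← shift_rho hu]
  calc J0p P.s p (shift k u) = ∑ j ∈ Tbox p, P.s (shift (rho p (j + k)) u) :=
        Finset.sum_congr rfl fun j _ => hterm j
    _ = ((Tbox p).val.map ((fun j' => P.s (shift j' u)) ∘ (fun j => rho p (j + k)))).sum := rfl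
    _ = (((Tbox p).val.map (fun j => rho p (j + k))).map (fun j' => P.s (shift j' u))).sum := by
        rw [Multiset.map_map]
    _ = ((Tbox p).val.map (fun j' => P.s (shift j' u))).sum := by rw [map_val_rho_add hp k]
    _ = J0p P.s p u := rfl

lemma J0p_const (c : ℝ) : J0p P.s p (fun _ => c) = ((Tbox p).card : ℝ) * P.s (fun _ => c) := by
  rw [J0p]
  rw [Finset.sum_congr rfl fun j _ => by rw [Spot, shift_const]]
  rw [Finset.sum_const, nsmul_eq_mul]

lemma J0p_submod (f g : Zn n → ℝ) :
    J0p P.s p (f ⊓ g) + J0p P.s p (f ⊔ g) ≤ J0p P.s p f + J0p P.s p g := by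
  rw [J0p, J0p, J0p, J0p, ← Finset.sum_add_distrib, ← Finset.sum_add_distrib]
  refine Finset.sum_le_sum fun j _ => ?_
  rw [Spot, Spot, Spot, Spot, shift_inf, shift_sup]
  exact s_submodular P _ _

/-- the sorting sweep: returns the pointwise min of the family and the reduced family -/
def sweep : (Zn n → ℝ) → List (Zn n → ℝ) → (Zn n → ℝ) × List (Zn n → ℝ)
  | f, [] => (f, [])
  | f, g :: L => ((sweep (f ⊓ g) L).1, (f ⊔ g) :: (sweep (f ⊓ g) L).2)

lemma sweep_length (L : List (Zn n → ℝ)) : ∀ f, (sweep f L).2.length = L.length := by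
  induction L with
  | nil => intro f; rfl
  | cons g L ih => intro f; simp [sweep, ih]

lemma sweep_energy (L : List (Zn n → ℝ)) : ∀ f,
    J0p P.s p (sweep f L).1 + ((sweep f L).2.map (J0p P.s p)).sum
      ≤ J0p P.s p f + (L.map (J0p P.s p)).sum := by
  induction L with
  | nil => intro f; simp [sweep]
  | cons g L ih =>
    intro f
    have h1 := ih (f ⊓ g)
    have h2 := J0p_submod (p := p) P f g
    simp only [sweep, List.map_cons, List.sum_cons]
    linarith

lemma sweep_multiset (L : List (Zn n → ℝ)) : ∀ f (i : Zn n),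
    ((sweep f L).1 i ::ₘ (((sweep f L).2.map (fun h => h i) : List ℝ) : Multiset ℝ))
      = f i ::ₘ ((L.map (fun h => h i) : List ℝ) : Multiset ℝ) := by
  induction L with
  | nil => intro f i; rfl
  | cons g L ih =>
    intro f i
    have h1 := ih (f ⊓ g) i
    simp only [sweep, List.map_cons, ← Multiset.cons_coe]
    rw [Multiset.cons_swap, h1]
    rcases le_total (f i) (g i) with h | h
    · rw [show (f ⊔ g) i = g i from by simp [Pi.sup_apply, sup_eq_right.mpr h],
        show (f ⊓ g) i = f i from by simp [Pi.inf_apply, inf_eq_left.mpr h]]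
      rw [Multiset.cons_swap]
    · rw [show (f ⊔ g) i = f i from by simp [Pi.sup_apply, sup_eq_left.mpr h],
        show (f ⊓ g) i = g i from by simp [Pi.inf_apply, inf_eq_right.mpr h]]

lemma sweep_min (L : List (Zn n → ℝ)) : ∀ f (i : Zn n),
    ((sweep f L).1 i : WithTop ℝ)
      = ((f i ::ₘ ((L.map (fun h => h i) : List ℝ) : Multiset ℝ)).map
          ((↑) : ℝ → WithTop ℝ)).inf := by
  induction L with
  | nil =>
    intro f i
    simp [sweep]
  | cons g L ih =>
    intro f i
    have hcoe : ∀ a b : ℝ, ((a ⊓ b : ℝ) : WithTop ℝ) = (a : WithTop ℝ) ⊓ (b : WithTop ℝ) := by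
      intro a b
      rcases le_total a b with h | h
      · rw [inf_eq_left.mpr h, inf_eq_left.mpr (by exact_mod_cast h : (a : WithTop ℝ) ≤ b)]
      · rw [inf_eq_right.mpr h, inf_eq_right.mpr (by exact_mod_cast h : (b : WithTop ℝ) ≤ a)]
    have h1 := ih (f ⊓ g) i
    show ((sweep (f ⊓ g) L).1 i : WithTop ℝ) = _
    rw [h1]
    simp only [List.map_cons, ← Multiset.cons_coe, Multiset.map_cons, Multiset.inf_cons]
    rw [show ((f ⊓ g) i : ℝ) = (f i : ℝ) ⊓ (g i : ℝ) from rfl, hcoe, inf_assoc]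

/-- the rearrangement inequality: if a finite family has site-independent value multiset `S`,
its total energy dominates that of the family of constants from `S` -/
lemma sweep_main : ∀ (N : ℕ) (L : List (Zn n → ℝ)) (S : Multiset ℝ), L.length = N →
    (∀ i : Zn n, ((L.map (fun h => h i) : List ℝ) : Multiset ℝ) = S) →
    (S.map (fun v => J0p P.s p (fun _ => v))).sum ≤ (L.map (J0p P.s p)).sum := by
  intro N
  induction N with
  | zero =>
    intro L S hL hS
    rw [List.length_eq_zero_iff] at hL
    subst hL
    have := hS 0
    simp only [List.map_nil] at this
    rw [← this]
    simp
  | succ N ih =>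
    intro L S hL hS
    match L, hL with
    | f :: L', hL =>
      have hL' : L'.length = N := by simpa using hL
      set m := (sweep f L').1 with hm
      set M := (sweep f L').2 with hM
      set c := m 0 with hc
      have hSmem : ∀ i, (m i ::ₘ ((M.map (fun h => h i) : List ℝ) : Multiset ℝ)) = S := by
        intro i
        rw [hm, hM, sweep_multiset]
        have := hS i
        simpa using this
      have hconst : ∀ i, m i = c := by
        intro i
        have h1 := sweep_min L' f i
        have h2 := sweep_min L' f 0
        have e : ∀ i : Zn n, (f i ::ₘ ((L'.map (fun h => h i) : List ℝ) : Multiset ℝ)) = S := by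
          intro i
          have := hS i
          simpa using this
        rw [e i] at h1
        rw [e 0] at h2
        rw [← hm] at h1 h2
        have : (m i : WithTop ℝ) = (m 0 : WithTop ℝ) := by rw [h1, h2]
        exact_mod_cast this
      have hmc : m = fun _ => c := funext hconst
      set S' : Multiset ℝ := ((M.map (fun h => h 0) : List ℝ) : Multiset ℝ) with hS'
      have hSc : S = c ::ₘ S' := by
        rw [← hSmem 0, hconst 0, hS']
      have hS'mem : ∀ i, ((M.map (fun h => h i) : List ℝ) : Multiset ℝ) = S' := by
        intro i
        have h1 := hSmem i
        have h2 := hSmem 0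
        rw [hconst i] at h1
        rw [hconst 0] at h2
        rw [← h2] at h1
        exact (Multiset.cons_inj_right c).mp h1
      have hMlen : M.length = N := by rw [hM, sweep_length, hL']
      have hih := ih M S' hMlen hS'mem
      have henergy := sweep_energy (p := p) P L' f
      rw [← hm, ← hM] at henergy
      have hsum : (S.map (fun v => J0p P.s p (fun _ => v))).sum
          = J0p P.s p (fun _ => c) + (S'.map (fun v => J0p P.s p (fun _ => v))).sum := by
        rw [hSc, Multiset.map_cons, Multiset.sum_cons]
      rw [hsum]
      have hJm : J0p P.s p m = J0p P.s p (fun _ => c) := by rw [hmc]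
      simp only [List.map_cons, List.sum_cons]
      -- coerce list sums of M
      have hMs : ((M.map (J0p P.s p) : List ℝ) : Multiset ℝ).sum = (M.map (J0p P.s p)).sum := by
        simp
      have : (S'.map (fun v => J0p P.s p (fun _ => v))).sum ≤ (M.map (J0p P.s p)).sum := hih
      linarith [henergy, hJm ▸ henergy]

/-- the key lower bound: `J_0^p(u) ≥ |T_0^p| ⬝ c_0` for every `p`-periodic `u` -/
lemma J0p_lower (hp : ∀ m, 1 ≤ p m) {u : Zn n → ℝ} (hu : Periodic p u) :
    ((Tbox p).card : ℝ) * c0 P.s ≤ J0p P.s p u := by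
  classical
  set T := Tbox p with hT
  set L : List (Zn n → ℝ) := T.toList.map (fun j => shift j u) with hL
  set S : Multiset ℝ := T.val.map u with hS
  have hmul : ∀ i : Zn n, ((L.map (fun h => h i) : List ℝ) : Multiset ℝ) = S := by
    intro i
    rw [hL]
    rw [List.map_map]
    have h1 : ((T.toList.map ((fun h => h i) ∘ (fun j => shift j u)) : List ℝ) : Multiset ℝ)
        = T.val.map (fun j => u (i + j)) := by
      rw [← Multiset.map_coe, Finset.coe_toList]
      rfl
    rw [h1, hS]
    have h2 : T.val.map (fun j => u (i + j)) = T.val.map (u ∘ (fun j => rho p (j + i))) := by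
      refine Multiset.map_congr rfl fun j _ => ?_
      show u (i + j) = u (rho p (j + i))
      rw [add_comm j i]
      exact periodic_rho hu (i + j)
    rw [h2, ← Multiset.map_map, map_val_rho_add hp]
  have hmain := sweep_main (p := p) P (N := L.length) L S rfl hmul
  -- RHS : each translate has the same energy
  have hRHS : (L.map (J0p P.s p)).sum = (T.card : ℝ) * J0p P.s p u := by
    rw [hL, List.map_map]
    have : T.toList.map (J0p P.s p ∘ (fun j => shift j u))
        = T.toList.map (fun _ => J0p P.s p u) := by
      refine List.map_congr_left fun j _ => ?_
      exact J0p_shift P hp hu j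
    rw [this, List.map_const', List.sum_replicate, Finset.length_toList, nsmul_eq_mul]
  -- LHS : each constant has energy ≥ card * c0
  have hLHS : ((T.card : ℝ) * ((T.card : ℝ) * c0 P.s)) ≤ (S.map (fun v => J0p P.s p (fun _ => v))).sum := by
    have h1 : ∀ v ∈ S, (T.card : ℝ) * c0 P.s ≤ J0p P.s p (fun _ => v) := by
      intro v _
      rw [J0p_const]
      have := c0_le P (fun _ => v) (fun _ _ => rfl)
      have hc : (0 : ℝ) ≤ (T.card : ℝ) := Nat.cast_nonneg _
      exact mul_le_mul_of_nonneg_left this hc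
    calc (T.card : ℝ) * ((T.card : ℝ) * c0 P.s)
        = (S.map (fun _ => (T.card : ℝ) * c0 P.s)).sum := by
          rw [Multiset.map_const', Multiset.sum_replicate, hS, Multiset.card_map]
          rw [nsmul_eq_mul]
          rfl
      _ ≤ (S.map (fun v => J0p P.s p (fun _ => v))).sum := by
          refine Multiset.sum_map_le_sum_map _ _ h1
  have hcard : (0 : ℝ) < (T.card : ℝ) := by
    have : (0 : Zn n) ∈ T := by
      rw [hT, mem_Tbox_iff]
      intro m
      have := hp m
      constructor <;> [simp; {simp; omega}]
    have : 0 < T.card := Finset.card_pos.mpr ⟨0, this⟩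
    exact_mod_cast this
  have := le_trans hLHS (le_trans hmain (le_of_eq hRHS))
  exact le_of_mul_le_mul_left this hcard

end Aux4
section Aux5

variable {n r : ℕ} (P : Setup n r) {p : Fin n → ℕ}

lemma periodic_of_periodicAll {u : Zn n → ℝ} (hu : PeriodicAll u) : Periodic p u := by
  intro i m
  rw [periodicAll_const hu (i + (p m : ℤ) • unitv m), periodicAll_const hu i]

lemma J0p_min (hp : ∀ m, 1 ≤ p m) {v0 : Zn n → ℝ} (hv0 : v0 ∈ M0 P.s) :
    J0p P.s p v0 = ((Tbox p).card : ℝ) * c0 P.s := by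
  have hc : v0 = fun _ => v0 0 := funext (periodicAll_const hv0.1)
  rw [hc, J0p_const, ← hc, s_v0_eq P hv0]

/-- clamping between the two minimizers does not increase the energy -/
lemma clamp_le (hp : ∀ m, 1 ≤ p m) {v0 w0 : Zn n → ℝ}
    (hv0 : v0 ∈ M0 P.s) (hw0 : w0 ∈ M0 P.s) {u : Zn n → ℝ} (hu : Periodic p u) :
    I0p P.s p v0 ((u ⊔ 0) ⊓ (w0 - v0)) ≤ I0p P.s p v0 u := by
  have hpv0 : Periodic p v0 := periodic_of_periodicAll hv0.1
  have hpw0 : Periodic p w0 := periodic_of_periodicAll hw0.1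
  have hper : Periodic p (u + v0) := periodic_add hu hpv0
  have hJv0 : J0p P.s p v0 = ((Tbox p).card : ℝ) * c0 P.s := J0p_min P hp hv0
  have hJw0 : J0p P.s p w0 = ((Tbox p).card : ℝ) * c0 P.s := J0p_min P hp hw0
  have h1 : J0p P.s p ((u + v0) ⊔ v0) ≤ J0p P.s p (u + v0) := by
    have hsub := J0p_submod P (p := p) (u + v0) v0
    have hlow := J0p_lower P hp (periodic_inf hper hpv0)
    linarith [hsub, hlow, hJv0.le, hJv0.ge]
  have h2 : J0p P.s p (((u + v0) ⊔ v0) ⊓ w0) ≤ J0p P.s p ((u + v0) ⊔ v0) := by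
    have hsub := J0p_submod P (p := p) ((u + v0) ⊔ v0) w0
    have hlow := J0p_lower P hp (periodic_sup (periodic_sup hper hpv0) hpw0)
    linarith [hsub, hlow]
  have hid : ((u ⊔ 0) ⊓ (w0 - v0)) + v0 = ((u + v0) ⊔ v0) ⊓ w0 := by
    funext i
    simp only [Pi.add_apply, Pi.inf_apply, Pi.sup_apply, Pi.sub_apply, Pi.zero_apply]
    rw [← min_add_add_right, ← max_add_add_right]
    simp
  rw [I0p, I0p, hid]
  exact le_trans h2 h1

end Aux5
section Aux6

variable {n r : ℕ} (P : Setup n r) {p : Fin n → ℕ}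

lemma restrict_shift_repr (hp : ∀ m, 1 ≤ p m) {u v0 : Zn n → ℝ}
    (hu : Periodic p u) (hv0 : PeriodicAll v0) (j : Zn n) :
    restrictB r (shift j (u + v0))
      = WithLp.toLp 2 fun i : (ball r (0 : Zn n) : Finset (Zn n)) =>
          toEuc p u ⟨rho p (i.1 + j), rho_mem_Tbox hp _⟩ + v0 0 := by
  ext i
  show (u + v0) (i.1 + j) = u (rho p (i.1 + j)) + v0 0
  rw [Pi.add_apply, ← periodic_rho hu (i.1 + j), periodicAll_const hv0]

lemma I0p_repr (hp : ∀ m, 1 ≤ p m) {u v0 : Zn n → ℝ}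
    (hu : Periodic p u) (hv0 : PeriodicAll v0) :
    I0p P.s p v0 u = ∑ j ∈ Tbox p, sEuc r P.s
      (WithLp.toLp 2 fun i : (ball r (0 : Zn n) : Finset (Zn n)) =>
        toEuc p u ⟨rho p (i.1 + j), rho_mem_Tbox hp _⟩ + v0 0) := by
  rw [I0p, J0p]
  refine Finset.sum_congr rfl fun j _ => ?_
  rw [Spot, s_eq_sEuc P, restrict_shift_repr hp hu hv0 j]

lemma cont_coord_map {ι κ : Type*} [Fintype ι] [Fintype κ]
    (idx : κ → ι) (a : ℝ) :
    Continuous fun x : EuclideanSpace ℝ ι =>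
      (WithLp.toLp 2 (fun i : κ => x (idx i) + a) : EuclideanSpace ℝ κ) := by
  have h1 : Continuous fun x : EuclideanSpace ℝ ι => ((fun i : κ => x (idx i) + a) : κ → ℝ) := by
    refine continuous_pi fun i => ?_
    exact ((continuous_apply (idx i)).comp
      (PiLp.continuous_ofLp 2 (fun _ : ι => ℝ))).add continuous_const
  exact (PiLp.continuous_toLp 2 (fun _ : κ => ℝ)).comp h1

lemma contI (hp : ∀ m, 1 ≤ p m) {v0 : Zn n → ℝ} (hv0 : PeriodicAll v0)
    {h : ℝ → Zn n → ℝ}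
    (hcont : ContinuousOn (fun θ => toEuc p (h θ)) (Set.Icc 0 1))
    (hper : ∀ θ ∈ Set.Icc (0 : ℝ) 1, Periodic p (h θ)) :
    ContinuousOn (fun θ => I0p P.s p v0 (h θ)) (Set.Icc 0 1) := by
  have heq : Set.EqOn (fun θ => I0p P.s p v0 (h θ))
      (fun θ => ∑ j ∈ Tbox p, sEuc r P.s
        (WithLp.toLp 2 fun i : (ball r (0 : Zn n) : Finset (Zn n)) =>
          toEuc p (h θ) ⟨rho p (i.1 + j), rho_mem_Tbox hp _⟩ + v0 0)) (Set.Icc 0 1) := by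
    intro θ hθ
    exact I0p_repr P hp (hper θ hθ) hv0
  refine ContinuousOn.congr ?_ heq
  refine continuousOn_finset_sum _ fun j _ => ?_
  have hΨ := cont_coord_map (ι := ((Tbox p : Finset (Zn n)) : Type _))
    (κ := ((ball r (0 : Zn n) : Finset (Zn n)) : Type _))
    (fun i => (⟨rho p (i.1 + j), rho_mem_Tbox hp _⟩ : (Tbox p : Finset (Zn n)))) (v0 0)
  exact (P.smooth.continuous.comp hΨ).comp_continuousOn hcont

lemma cont_clamp (W : Zn n → ℝ) {h : ℝ → Zn n → ℝ}
    (hcont : ContinuousOn (fun θ => toEuc p (h θ)) (Set.Icc 0 1)) :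
    ContinuousOn (fun θ => toEuc p (((h θ) ⊔ 0) ⊓ W)) (Set.Icc 0 1) := by
  have hΨ : Continuous fun x : EuclideanSpace ℝ ((Tbox p : Finset (Zn n)) : Type _) =>
      (WithLp.toLp 2 (fun i => min (max (x i) 0) (W i.1)) : EuclideanSpace ℝ ((Tbox p : Finset (Zn n)) : Type _)) := by
    have h1 : Continuous fun x : EuclideanSpace ℝ ((Tbox p : Finset (Zn n)) : Type _) =>
        ((fun i => min (max (x i) 0) (W i.1)) : ((Tbox p : Finset (Zn n)) : Type _) → ℝ) := by
      refine continuous_pi fun i => ?_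
      exact (((continuous_apply i).comp
        (PiLp.continuous_ofLp 2 (fun _ : ((Tbox p : Finset (Zn n)) : Type _) => ℝ))).max
        continuous_const).min continuous_const
    exact (PiLp.continuous_toLp 2
      (fun _ : ((Tbox p : Finset (Zn n)) : Type _) => ℝ)).comp h1
  have : (fun θ => toEuc p (((h θ) ⊔ 0) ⊓ W))
      = fun θ => (WithLp.toLp 2 (fun i => min (max ((toEuc p (h θ)) i) 0) (W i.1)) :
          EuclideanSpace ℝ ((Tbox p : Finset (Zn n)) : Type _)) := by
    funext θ
    ext i
    show ((h θ ⊔ 0) ⊓ W) i.1 = _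
    simp only [Pi.inf_apply, Pi.sup_apply, Pi.zero_apply]
    rfl
  rw [this]
  exact hΨ.comp_continuousOn hcont

end Aux6
/-- the constrained minimax level `d_0^p` coincides with the classical mountain pass
level `d̄_0^p` taken over all norm-continuous paths in `Λ_0^p` joining `0` to `w_0 - v_0`. -/
theorem statement6 {n r : ℕ} (P : Setup n r) (v0 w0 : Zn n → ℝ)
    (hv0 : v0 ∈ M0 P.s) (hw0 : w0 ∈ M0 P.s) (hlt : ∀ i, v0 i < w0 i)
    (hadj : ∀ u ∈ M0 P.s, u ≠ v0 → u ≠ w0 → ¬(v0 ≤ u ∧ u ≤ w0))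
    (p : Fin n → ℕ) (hp : ∀ m, 1 ≤ p m) :
    d0p P.s p v0 w0 =
      sInf {y | ∃ h : ℝ → Zn n → ℝ,
        (ContinuousOn (fun θ => toEuc p (h θ)) (Set.Icc 0 1) ∧
          (∀ θ ∈ Set.Icc (0 : ℝ) 1, Periodic p (h θ)) ∧
          h 0 = 0 ∧ h 1 = w0 - v0) ∧
        y = sSup ((fun θ => I0p P.s p v0 (h θ)) '' Set.Icc 0 1)} := by
  classical
  set W : Zn n → ℝ := w0 - v0 with hW
  have hpv0 : Periodic p v0 := periodic_of_periodicAll hv0.1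
  have hpw0 : Periodic p w0 := periodic_of_periodicAll hw0.1
  have hWnn : ∀ i, 0 ≤ W i := fun i => by
    simp only [hW, Pi.sub_apply, sub_nonneg]; exact (hlt i).le
  set Sc := {y | ∃ h, PathIn p v0 w0 h ∧
      y = sSup ((fun θ => I0p P.s p v0 (h θ)) '' Set.Icc 0 1)} with hSc
  set Sr := {y | ∃ h : ℝ → Zn n → ℝ,
      (ContinuousOn (fun θ => toEuc p (h θ)) (Set.Icc 0 1) ∧
        (∀ θ ∈ Set.Icc (0 : ℝ) 1, Periodic p (h θ)) ∧
        h 0 = 0 ∧ h 1 = w0 - v0) ∧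
      y = sSup ((fun θ => I0p P.s p v0 (h θ)) '' Set.Icc 0 1)} with hSr
  have hd0p : d0p P.s p v0 w0 = sInf Sc := rfl
  have hsub : Sc ⊆ Sr := by
    rintro y ⟨h, ⟨hcont, hmem, h0, h1⟩, hy⟩
    exact ⟨h, ⟨hcont, fun θ hθ => (hmem θ hθ).1, h0, h1⟩, hy⟩
  -- lower bound for elements of Sr
  have hylow : ∀ y ∈ Sr, ((Tbox p).card : ℝ) * c0 P.s ≤ y := by
    rintro y ⟨h, ⟨hcont, hper, h0, h1⟩, rfl⟩
    have hIc := contI P hp hv0.1 hcont hper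
    have hbdd : BddAbove ((fun θ => I0p P.s p v0 (h θ)) '' Set.Icc 0 1) :=
      (isCompact_Icc.image_of_continuousOn hIc).bddAbove
    have h0mem : I0p P.s p v0 (h 0) ∈ (fun θ => I0p P.s p v0 (h θ)) '' Set.Icc 0 1 :=
      ⟨0, Set.left_mem_Icc.mpr zero_le_one, rfl⟩
    have hval : I0p P.s p v0 (h 0) = ((Tbox p).card : ℝ) * c0 P.s := by
      rw [h0, I0p, zero_add, J0p_min P hp hv0]
    calc ((Tbox p).card : ℝ) * c0 P.s = I0p P.s p v0 (h 0) := hval.symm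
      _ ≤ _ := le_csSup hbdd h0mem
  have hbddSr : BddBelow Sr := ⟨((Tbox p).card : ℝ) * c0 P.s, hylow⟩
  have hbddSc : BddBelow Sc := hbddSr.mono hsub
  -- the linear path shows Sc is nonempty
  have hne : Sc.Nonempty := by
    set hl : ℝ → Zn n → ℝ := fun θ i => θ * W i with hhl
    refine ⟨sSup ((fun θ => I0p P.s p v0 (hl θ)) '' Set.Icc 0 1), hl, ⟨?_, ?_, ?_, ?_⟩, rfl⟩
    · have hc : Continuous fun θ : ℝ =>
          (WithLp.toLp 2 (fun j => θ * W j.1) : EuclideanSpace ℝ ((Tbox p : Finset (Zn n)) : Type _)) := by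
        have h1 : Continuous fun θ : ℝ =>
            ((fun j => θ * W j.1) : ((Tbox p : Finset (Zn n)) : Type _) → ℝ) :=
          continuous_pi fun j => continuous_id.mul continuous_const
        exact (PiLp.continuous_toLp 2
          (fun _ : ((Tbox p : Finset (Zn n)) : Type _) => ℝ)).comp h1
      exact hc.continuousOn
    · intro θ hθ
      refine ⟨?_, ?_, ?_⟩
      · intro i m
        show θ * W (i + (p m : ℤ) • unitv m) = θ * W i
        have : W (i + (p m : ℤ) • unitv m) = W i := by
          simp only [hW, Pi.sub_apply, hpv0 i m, hpw0 i m]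
        rw [this]
      · intro i
        exact mul_nonneg hθ.1 (hWnn i)
      · intro i
        calc θ * W i ≤ 1 * W i := mul_le_mul_of_nonneg_right hθ.2 (hWnn i)
          _ = W i := one_mul _
    · funext i; simp [hhl]
    · funext i; simp [hhl, hW]
  have hneSr : Sr.Nonempty := hne.mono hsub
  rw [hd0p]
  refine le_antisymm (le_csInf hneSr ?_) (csInf_le_csInf hbddSr hne hsub)
  rintro y ⟨h, ⟨hcont, hper, h0, h1⟩, rfl⟩
  -- clamp the path
  set g : ℝ → Zn n → ℝ := fun θ => ((h θ) ⊔ 0) ⊓ W with hg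
  have hgPath : PathIn p v0 w0 g := by
    refine ⟨cont_clamp W hcont, ?_, ?_, ?_⟩
    · intro θ hθ
      refine ⟨?_, ?_, ?_⟩
      · exact periodic_inf (periodic_sup (hper θ hθ) (fun _ _ => rfl))
          (fun i m => by simp only [hW, Pi.sub_apply, hpv0 i m, hpw0 i m])
      · intro i
        show 0 ≤ ((h θ ⊔ 0) ⊓ W) i
        simp only [Pi.inf_apply, Pi.sup_apply, Pi.zero_apply, le_inf_iff]
        exact ⟨le_sup_right, hWnn i⟩
      · intro i
        show ((h θ ⊔ 0) ⊓ W) i ≤ W i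
        simp only [Pi.inf_apply]
        exact inf_le_right
    · funext i
      show ((h 0 ⊔ 0) ⊓ W) i = 0
      rw [h0]
      simp only [Pi.inf_apply, Pi.sup_apply, Pi.zero_apply, sup_idem]
      exact min_eq_left (hWnn i)
    · funext i
      show ((h 1 ⊔ 0) ⊓ W) i = W i
      rw [h1, ← hW]
      simp only [Pi.inf_apply, Pi.sup_apply, Pi.zero_apply]
      rw [max_eq_left (hWnn i), min_self]
  have hIc := contI P hp hv0.1 hcont hper
  have hbdd : BddAbove ((fun θ => I0p P.s p v0 (h θ)) '' Set.Icc 0 1) :=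
    (isCompact_Icc.image_of_continuousOn hIc).bddAbove
  have hy' : sSup ((fun θ => I0p P.s p v0 (g θ)) '' Set.Icc 0 1) ∈ Sc :=
    ⟨g, hgPath, rfl⟩
  refine le_trans (csInf_le hbddSc hy') ?_
  refine csSup_le (((Set.nonempty_Icc).mpr zero_le_one).image _) ?_
  rintro z ⟨θ, hθ, rfl⟩
  calc I0p P.s p v0 (g θ) ≤ I0p P.s p v0 (h θ) := clamp_le P hp hv0 hw0 (hper θ hθ)
    _ ≤ _ := le_csSup hbdd ⟨θ, hθ, rfl⟩
end

end FK
end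

section
/- Let k ∈ ℕ and h ∈ Ĥ_0^{p(k)}. (1) If h(θ) ≠ u_0 for every θ ∈ [0,1], then the map t ↦ θ̲_t is monotone nondecreasing and the map t ↦ θ̄_t is monotone nonincreasing on (0,∞). (2) If there is a unique θ_0 ∈ (0,1) with h(θ_0) = u_0, then θ̲_t = θ_0 = θ̄_t for all t > 0; and if h(θ) = u_0 exactly for θ in a maximal interval [a,b] ⊂ (0,1), then θ̲_t = a and θ̄_t = b for all t > 0. -/
open Filter Topology

namespace FK

noncomputable section

variable {n : ℕ}

/-! ### Auxiliary lemmas for statement12 -/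

section Aux

variable {n : ℕ}

lemma abs_coord_le_znorm (i : Zn n) (m : Fin n) : (i m).natAbs ≤ znorm i := by
  unfold znorm
  exact Finset.single_le_sum (f := fun j => (i j).natAbs) (fun _ _ => Nat.zero_le _) (Finset.mem_univ m)

lemma mem_ball_zero_iff {r : ℕ} {i : Zn n} : i ∈ ball r (0 : Zn n) ↔ znorm i ≤ r := by
  unfold ball
  rw [Finset.mem_filter, Finset.mem_Icc]
  constructor
  · rintro ⟨-, h⟩; simpa using h
  · intro h
    refine ⟨⟨fun m => ?_, fun m => ?_⟩, by simpa using h⟩ <;>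
    · have h1 : (i m).natAbs ≤ r := le_trans (abs_coord_le_znorm i m) h
      simp only [Pi.zero_apply]
      omega

lemma znorm_sub_comm (i j : Zn n) : znorm (i - j) = znorm (j - i) := by
  unfold znorm
  apply Finset.sum_congr rfl
  intro m _
  have : (i - j) m = i m - j m := rfl
  have h2 : (j - i) m = j m - i m := rfl
  rw [this, h2]; omega

lemma card_ball_le (r : ℕ) (i : Zn n) : (ball r i).card ≤ (2 * r + 1) ^ n := by
  refine le_trans (Finset.card_filter_le _ _) ?_
  rw [Pi.card_Icc]
  have h1 : ∀ m : Fin n, (Finset.Icc (i m - (r : ℤ)) (i m + (r : ℤ))).card = 2 * r + 1 := by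
    intro m; rw [Int.card_Icc]; omega
  have heq : ∏ m : Fin n, (Finset.Icc ((fun m => i m - (r:ℤ)) m) ((fun m => i m + (r:ℤ)) m)).card
      = (2 * r + 1) ^ n := by
    rw [Finset.prod_congr rfl fun m _ => h1 m, Finset.prod_const, Finset.card_univ,
      Fintype.card_fin]
  exact le_of_eq heq

lemma Periodic.sub' {p : Fin n → ℕ} {u v : Zn n → ℝ} (hu : Periodic p u) (hv : Periodic p v) :
    Periodic p (u - v) := by
  intro i m
  have : (u - v) (i + (p m : ℤ) • unitv m) = u (i + (p m : ℤ) • unitv m) - v (i + (p m : ℤ) • unitv m) := rfl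
  rw [this, hu i m, hv i m]; rfl

lemma periodic_shift_mul {p : Fin n → ℕ} {w : Zn n → ℝ} (hw : Periodic p w) (m : Fin n)
    (c : ℤ) (i : Zn n) : w (i + (c * (p m : ℤ)) • unitv m) = w i := by
  induction c using Int.induction_on with
  | zero => simp
  | succ c ih =>
    have h1 : i + (((c : ℤ) + 1) * (p m : ℤ)) • unitv m
        = (i + ((c : ℤ) * (p m : ℤ)) • unitv m) + (p m : ℤ) • unitv m := by
      rw [add_mul, one_mul, add_smul, add_assoc]
    rw [h1, hw _ m, ih]
  | pred c ih =>
    have h1 : i + ((-(c : ℤ) - 1) * (p m : ℤ)) • unitv m + (p m : ℤ) • unitv m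
        = i + ((-(c : ℤ)) * (p m : ℤ)) • unitv m := by
      rw [add_assoc, ← add_smul]; ring_nf
    calc w (i + ((-(c : ℤ) - 1) * (p m : ℤ)) • unitv m)
        = w (i + ((-(c : ℤ) - 1) * (p m : ℤ)) • unitv m + (p m : ℤ) • unitv m) :=
          (hw _ m).symm
      _ = w (i + ((-(c : ℤ)) * (p m : ℤ)) • unitv m) := by rw [h1]
      _ = w i := ih

/-- componentwise reduction mod the period -/
def modv (p : Fin n → ℕ) (l : Zn n) : Zn n := fun m => l m % (p m : ℤ)

lemma modv_mem_Tbox {p : Fin n → ℕ} (hp : ∀ m, 1 ≤ p m) (l : Zn n) : modv p l ∈ Tbox p := by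
  rw [Tbox, Finset.mem_Icc]
  have key : ∀ m : Fin n, 0 ≤ l m % (p m : ℤ) ∧ l m % (p m : ℤ) ≤ (p m : ℤ) - 1 := by
    intro m
    have hpos : (0:ℤ) < (p m : ℤ) := by exact_mod_cast hp m
    have h0 := Int.emod_nonneg (l m) (ne_of_gt hpos)
    have h1 := Int.emod_lt_of_pos (l m) hpos
    omega
  exact ⟨fun m => (key m).1, fun m => (key m).2⟩

lemma periodic_modv {p : Fin n → ℕ} {w : Zn n → ℝ} (hw : Periodic p w) (l : Zn n) :
    w (modv p l) = w l := by
  have key : ∀ S : Finset (Fin n), w (fun m => if m ∈ S then l m % (p m : ℤ) else l m) = w l := by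
    intro S
    induction S using Finset.induction_on with
    | empty => simp
    | @insert a S ha ih =>
      have hfun : (fun m => if m ∈ insert a S then l m % (p m : ℤ) else l m)
          = (fun m => if m ∈ S then l m % (p m : ℤ) else l m)
            + ((-(l a / (p a : ℤ))) * (p a : ℤ)) • unitv a := by
        funext m
        by_cases hma : m = a
        · subst hma
          have h1 : (if m ∈ insert m S then l m % (p m : ℤ) else l m) = l m % (p m : ℤ) := by
            simp
          have h2 : (if m ∈ S then l m % (p m : ℤ) else l m) = l m := by simp [ha]
          show (if m ∈ insert m S then l m % (p m : ℤ) else l m)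
            = (if m ∈ S then l m % (p m : ℤ) else l m)
              + (-(l m / (p m : ℤ)) * (p m : ℤ)) * (unitv m m)
          have hu : unitv m m = (1:ℤ) := by simp [unitv]
          rw [h1, h2, hu, mul_one, Int.emod_def]; ring
        · show _ = (if m ∈ S then l m % (p m : ℤ) else l m)
              + (-(l a / (p a : ℤ)) * (p a : ℤ)) * (unitv a m)
          simp [unitv, Finset.mem_insert, hma, Ne.symm hma]
      rw [hfun, periodic_shift_mul hw a _, ih]
  have := key Finset.univ
  simp at this; exact this

lemma per_abs_le {p : Fin n → ℕ} {w : Zn n → ℝ} (hw : Periodic p w) (hp : ∀ m, 1 ≤ p m)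
    (l : Zn n) : |w l| ≤ ∑ m ∈ Tbox p, |w m| := by
  rw [← periodic_modv hw l]
  exact Finset.single_le_sum (f := fun m => |w m|) (fun _ _ => abs_nonneg _) (modv_mem_Tbox hp l)

lemma per_pos_le {p : Fin n → ℕ} {w : Zn n → ℝ} (hw : Periodic p w) (hp : ∀ m, 1 ≤ p m)
    (l : Zn n) : max (w l) 0 ≤ ∑ m ∈ Tbox p, max (w m) 0 := by
  rw [← periodic_modv hw l]
  exact Finset.single_le_sum (f := fun m => max (w m) 0) (fun _ _ => le_max_right _ _)
    (modv_mem_Tbox hp l)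

lemma periodicAll_to {u : Zn n → ℝ} (hu : PeriodicAll u) (p : Fin n → ℕ) : Periodic p u := by
  intro i m
  have base : ∀ x : Zn n, u (x + unitv m) = u x := by
    intro x
    have := hu x m
    simpa using this
  have key : ∀ c : ℕ, ∀ x : Zn n, u (x + (c : ℤ) • unitv m) = u x := by
    intro c
    induction c with
    | zero => simp
    | succ c ih =>
      intro x
      have h1 : x + ((c + 1 : ℕ) : ℤ) • unitv m = (x + (c : ℤ) • unitv m) + unitv m := by
        push_cast
        rw [add_smul, one_smul, add_assoc]
      rw [h1, base, ih]
  exact key (p m) i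

end Aux
section CalcB

variable {n r : ℕ}

/-- restriction of a configuration to the ball, as a point of euclidean space -/
def projB (r : ℕ) (u : Zn n → ℝ) : EuclideanSpace ℝ (ball r (0 : Zn n)) := WithLp.toLp 2 (fun j => u j.1)

lemma s_eq_sEuc_s12 {s : (Zn n → ℝ) → ℝ}
    (hloc : ∀ u v : Zn n → ℝ, (∀ k, znorm k ≤ r → u k = v k) → s u = s v) (u : Zn n → ℝ) :
    s u = sEuc r s (projB r u) := by
  unfold sEuc projB
  apply hloc
  intro k hk
  rw [dif_pos (mem_ball_zero_iff.mpr hk)]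

lemma projB_update {m : Zn n} (hm : znorm m ≤ r) (u : Zn n → ℝ) (t : ℝ) :
    projB r (Function.update u m t)
      = WithLp.toLp 2 (Function.update (projB r u) ⟨m, mem_ball_zero_iff.mpr hm⟩ t) := by
  ext j
  rcases j with ⟨jv, hjv⟩
  by_cases hj : jv = m
  · subst hj
    simp [projB, Function.update_self]
  · have hne : (⟨jv, hjv⟩ : (ball r (0 : Zn n))) ≠ ⟨m, mem_ball_zero_iff.mpr hm⟩ := by
      intro hcontra
      exact hj (congrArg Subtype.val hcontra)
    simp [projB, Function.update_of_ne hj, Function.update_of_ne hne]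

lemma euc_update (X : EuclideanSpace ℝ (ball r (0 : Zn n))) (j : (ball r (0 : Zn n))) (t : ℝ) :
    WithLp.toLp 2 (Function.update X j t) = X + (t - X j) • EuclideanSpace.single j (1 : ℝ) := by
  ext j'
  show Function.update X j t j' = X j' + (t - X j) * (EuclideanSpace.single j (1:ℝ)) j'
  by_cases h : j' = j
  · subst h
    rw [Function.update_self, EuclideanSpace.single_apply, if_pos rfl]
    ring
  · rw [Function.update_of_ne h, EuclideanSpace.single_apply, if_neg h]
    ring

lemma key_deriv {F : EuclideanSpace ℝ (ball r (0 : Zn n)) → ℝ} (hF : Differentiable ℝ F)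
    {l : Zn n} (hl : znorm l ≤ r) (u : Zn n → ℝ) :
    deriv (fun t => F (projB r (Function.update u l t))) (u l)
      = fderiv ℝ F (projB r u)
          (EuclideanSpace.single ⟨l, mem_ball_zero_iff.mpr hl⟩ (1 : ℝ)) := by
  set j : (ball r (0 : Zn n)) := ⟨l, mem_ball_zero_iff.mpr hl⟩ with hj
  have h1 : ∀ t, projB r (Function.update u l t)
      = projB r u + (t - u l) • EuclideanSpace.single j (1:ℝ) := by
    intro t
    rw [projB_update hl, euc_update]
    rfl
  have hline : HasDerivAt (fun t : ℝ =>
      projB r u + (t - u l) • EuclideanSpace.single j (1:ℝ))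
      (EuclideanSpace.single j (1:ℝ)) (u l) := by
    have h2 : HasDerivAt (fun t : ℝ => t - u l) 1 (u l) := (hasDerivAt_id _).sub_const _
    have h3 := (h2.smul_const (EuclideanSpace.single j (1:ℝ))).const_add (projB r u)
    simpa using h3
  have h4 : HasDerivAt (fun t => F (projB r (Function.update u l t)))
      (fderiv ℝ F (projB r u) (EuclideanSpace.single j (1:ℝ))) (u l) := by
    have heq : (fun t => F (projB r (Function.update u l t)))
        = fun t => F (projB r u + (t - u l) • EuclideanSpace.single j (1:ℝ)) :=
      funext fun t => by rw [h1]
    rw [heq]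
    have hF' := (hF (projB r u)).hasFDerivAt
    have hcomp := hF'.comp_hasDerivAt_of_eq (u l) hline (by simp)
    exact hcomp
  exact h4.deriv

lemma pd_eq {s : (Zn n → ℝ) → ℝ}
    (hloc : ∀ u v : Zn n → ℝ, (∀ k, znorm k ≤ r → u k = v k) → s u = s v)
    (hsm : ContDiff ℝ 2 (sEuc r s)) {m : Zn n} (hm : znorm m ≤ r) (u : Zn n → ℝ) :
    pd s m u = fderiv ℝ (sEuc r s) (projB r u)
      (EuclideanSpace.single ⟨m, mem_ball_zero_iff.mpr hm⟩ (1 : ℝ)) := by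
  unfold pd
  have heq : (fun t => s (Function.update u m t))
      = fun t => sEuc r s (projB r (Function.update u m t)) :=
    funext fun t => s_eq_sEuc_s12 hloc _
  rw [heq, key_deriv (hsm.differentiable (by norm_num)) hm]

/-- the partial-derivative functional on euclidean space -/
def GmF (r : ℕ) (s : (Zn n → ℝ) → ℝ) (j : (ball r (0 : Zn n))) :
    EuclideanSpace ℝ (ball r (0 : Zn n)) → ℝ :=
  fun x => fderiv ℝ (sEuc r s) x (EuclideanSpace.single j (1 : ℝ))

lemma GmF_diff {s : (Zn n → ℝ) → ℝ} (hsm : ContDiff ℝ 2 (sEuc r s)) (j : (ball r (0 : Zn n))) :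
    Differentiable ℝ (GmF r s j) := by
  have h1 : ContDiff ℝ 1 (fderiv ℝ (sEuc r s)) := hsm.fderiv_right (by norm_num)
  exact (h1.differentiable one_ne_zero).clm_apply (differentiable_const _)

lemma pd2_eq {s : (Zn n → ℝ) → ℝ}
    (hloc : ∀ u v : Zn n → ℝ, (∀ k, znorm k ≤ r → u k = v k) → s u = s v)
    (hsm : ContDiff ℝ 2 (sEuc r s)) {l m : Zn n} (hl : znorm l ≤ r) (hm : znorm m ≤ r)
    (u : Zn n → ℝ) :
    pd2 s l m u = fderiv ℝ (GmF r s ⟨m, mem_ball_zero_iff.mpr hm⟩) (projB r u)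
      (EuclideanSpace.single ⟨l, mem_ball_zero_iff.mpr hl⟩ (1 : ℝ)) := by
  unfold pd2
  show pd (fun w => pd s m w) l u = _
  unfold pd
  have heq : (fun t => pd s m (Function.update u l t))
      = fun t => GmF r s ⟨m, mem_ball_zero_iff.mpr hm⟩ (projB r (Function.update u l t)) :=
    funext fun t => pd_eq hloc hsm hm _
  rw [show (fun t => deriv (fun t' => s (Function.update (Function.update u l t) m t'))
      ((Function.update u l t) m)) = fun t => pd s m (Function.update u l t) from rfl] at *
  rw [heq, key_deriv (GmF_diff hsm _) hl]

lemma euc_sum_single (x : EuclideanSpace ℝ (ball r (0 : Zn n))) :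
    x = ∑ j : (ball r (0 : Zn n)), x j • EuclideanSpace.single j (1 : ℝ) := by
  ext j'
  simp [EuclideanSpace.single_apply, Pi.single_apply]

lemma projB_add_smul (v d : Zn n → ℝ) (σ : ℝ) :
    projB r (v + σ • d) = projB r v + σ • projB r d := by
  ext j; simp [projB]

lemma hasDerivAt_pd_line {s : (Zn n → ℝ) → ℝ}
    (hloc : ∀ u v : Zn n → ℝ, (∀ k, znorm k ≤ r → u k = v k) → s u = s v)
    (hsm : ContDiff ℝ 2 (sEuc r s)) {m : Zn n} (hm : znorm m ≤ r) (v d : Zn n → ℝ) (σ : ℝ) :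
    HasDerivAt (fun σ : ℝ => pd s m (v + σ • d))
      (∑ l : (ball r (0 : Zn n)), d l.1 * pd2 s l.1 m (v + σ • d)) σ := by
  set j : (ball r (0 : Zn n)) := ⟨m, mem_ball_zero_iff.mpr hm⟩ with hj
  have hfun : (fun σ : ℝ => pd s m (v + σ • d))
      = fun σ : ℝ => GmF r s j (projB r v + σ • projB r d) := by
    funext σ'
    rw [pd_eq hloc hsm hm, ← projB_add_smul]
    rfl
  rw [hfun]
  have hline : HasDerivAt (fun σ : ℝ => projB r v + σ • projB r d) (projB r d) σ := by
    have h2 := ((hasDerivAt_id σ).smul_const (projB r d)).const_add (projB r v)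
    simpa using h2
  have hcomp := ((GmF_diff hsm j) (projB r v + σ • projB r d)).hasFDerivAt.comp_hasDerivAt σ hline
  refine hcomp.congr_deriv (Eq.symm ?_)
  have hX : projB r (v + σ • d) = projB r v + σ • projB r d := projB_add_smul v d σ
  set X := projB r v + σ • projB r d with hXdef
  conv_rhs => rw [euc_sum_single (projB r d)]
  rw [map_sum]
  refine Finset.sum_congr rfl fun l _ => ?_
  rw [map_smul, pd2_eq hloc hsm (mem_ball_zero_iff.mp l.2) hm, hX]
  simp only [smul_eq_mul]
  rfl

lemma shift_update (j i : Zn n) (u : Zn n → ℝ) (t : ℝ) :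
    shift j (Function.update u i t) = Function.update (shift j u) (i - j) t := by
  funext x
  show Function.update u i t (x + j) = Function.update (shift j u) (i - j) t x
  rw [Function.update_apply, Function.update_apply]
  have hiff : x + j = i ↔ x = i - j := by
    constructor
    · intro hx; rw [← hx]; abel
    · intro hx; rw [hx]; abel
  by_cases hx : x + j = i
  · rw [if_pos hx, if_pos (hiff.mp hx)]
  · rw [if_neg hx, if_neg (fun hc => hx (hiff.mpr hc))]
    rfl

lemma pd_Spot (s : (Zn n → ℝ) → ℝ) (j i : Zn n) (u : Zn n → ℝ) :
    pd (Spot s j) i u = pd s (i - j) (shift j u) := by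
  unfold pd Spot
  have h2 : shift j u (i - j) = u i := by
    show u (i - j + j) = u i
    congr 1
    abel
  simp only [shift_update]
  rw [h2]

end CalcB
section CalcC

variable {n r : ℕ} {s : (Zn n → ℝ) → ℝ}

lemma hasDerivAt_grad_line
    (hloc : ∀ u v : Zn n → ℝ, (∀ k, znorm k ≤ r → u k = v k) → s u = s v)
    (hsm : ContDiff ℝ 2 (sEuc r s)) (i : Zn n) (v d : Zn n → ℝ) (σ : ℝ) :
    HasDerivAt (fun σ : ℝ => grad r s (v + σ • d) i)
      (∑ j ∈ ball r i, ∑ l : (ball r (0 : Zn n)),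
        d (l.1 + j) * pd2 s l.1 (i - j) (shift j (v + σ • d))) σ := by
  have hfun : (fun σ : ℝ => grad r s (v + σ • d) i)
      = fun σ : ℝ => ∑ j ∈ ball r i, pd s (i - j) (shift j v + σ • shift j d) := by
    funext σ'
    unfold grad
    refine Finset.sum_congr rfl fun j _ => ?_
    rw [pd_Spot]
    rfl
  rw [hfun]
  apply HasDerivAt.fun_sum
  intro j hj
  have hm : znorm (i - j) ≤ r := by
    rw [znorm_sub_comm]; exact (Finset.mem_filter.mp hj).2
  exact hasDerivAt_pd_line hloc hsm hm (shift j v) (shift j d) σ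

lemma grad_diff_repr
    (hloc : ∀ u v : Zn n → ℝ, (∀ k, znorm k ≤ r → u k = v k) → s u = s v)
    (hsm : ContDiff ℝ 2 (sEuc r s)) (x y : Zn n → ℝ) (i : Zn n) :
    ∃ z : Zn n → ℝ, grad r s x i - grad r s y i
      = ∑ j ∈ ball r i, ∑ l : (ball r (0 : Zn n)),
          (x - y) (l.1 + j) * pd2 s l.1 (i - j) (shift j z) := by
  set d : Zn n → ℝ := x - y with hd
  set g : ℝ → ℝ := fun σ => grad r s (y + σ • d) i with hg
  set g' : ℝ → ℝ := fun σ => ∑ j ∈ ball r i, ∑ l : (ball r (0 : Zn n)),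
      d (l.1 + j) * pd2 s l.1 (i - j) (shift j (y + σ • d)) with hg'
  have hder : ∀ σ : ℝ, HasDerivAt g (g' σ) σ := fun σ => hasDerivAt_grad_line hloc hsm i y d σ
  have hcont : ContinuousOn g (Set.Icc 0 1) :=
    fun σ _ => (hder σ).continuousAt.continuousWithinAt
  obtain ⟨σ₀, _, hσ₀⟩ := exists_hasDerivAt_eq_slope g g' (by norm_num : (0:ℝ) < 1) hcont
    (fun σ _ => hder σ)
  refine ⟨y + σ₀ • d, ?_⟩
  have h1 : g 1 = grad r s x i := by
    have : y + (1:ℝ) • d = x := by rw [one_smul, hd]; abel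
    rw [hg]; simp only []; rw [this]
  have h0 : g 0 = grad r s y i := by
    have : y + (0:ℝ) • d = y := by rw [zero_smul, add_zero]
    rw [hg]; simp only []; rw [this]
  have := hσ₀
  rw [h1, h0] at this
  simp only [sub_zero, div_one] at this
  rw [← this]

lemma grad_sub_abs_le
    (hloc : ∀ u v : Zn n → ℝ, (∀ k, znorm k ≤ r → u k = v k) → s u = s v)
    (hsm : ContDiff ℝ 2 (sEuc r s)) {C : ℝ}
    (hS4 : ∀ i k : Zn n, znorm i ≤ r → znorm k ≤ r → ∀ u, |pd2 s i k u| ≤ C)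
    {p : Fin n → ℕ} (hp : ∀ m, 1 ≤ p m) {x y : Zn n → ℝ} (hper : Periodic p (x - y))
    (i : Zn n) :
    |grad r s x i - grad r s y i|
      ≤ (C * ((2*r+1:ℕ):ℝ)^n * ((2*r+1:ℕ):ℝ)^n) * ∑ m ∈ Tbox p, |(x - y) m| := by
  obtain ⟨z, hz⟩ := grad_diff_repr hloc hsm x y i
  set T := ∑ m ∈ Tbox p, |(x - y) m| with hT
  have hT0 : 0 ≤ T := Finset.sum_nonneg fun _ _ => abs_nonneg _
  have hC0 : 0 ≤ C :=
    le_trans (abs_nonneg _) (hS4 0 0 (by simp [znorm]) (by simp [znorm]) 0)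
  rw [hz]
  have hinner : ∀ j ∈ ball r i,
      |∑ l : (ball r (0 : Zn n)), (x - y) (l.1 + j) * pd2 s l.1 (i - j) (shift j z)|
        ≤ (((2*r+1:ℕ):ℝ)^n) * (C * T) := by
    intro j hj
    have hij : znorm (i - j) ≤ r := by
      rw [znorm_sub_comm]; exact (Finset.mem_filter.mp hj).2
    refine le_trans (Finset.abs_sum_le_sum_abs _ _) ?_
    have hterm : ∀ l : (ball r (0 : Zn n)),
        |(x - y) (l.1 + j) * pd2 s l.1 (i - j) (shift j z)| ≤ C * T := by
      intro l
      rw [abs_mul]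
      have h1 : |(x - y) (l.1 + j)| ≤ T := per_abs_le hper hp _
      have h2 : |pd2 s l.1 (i - j) (shift j z)| ≤ C :=
        hS4 _ _ (mem_ball_zero_iff.mp l.2) hij _
      calc |(x - y) (l.1 + j)| * |pd2 s l.1 (i - j) (shift j z)|
          ≤ T * C := mul_le_mul h1 h2 (abs_nonneg _) hT0
        _ = C * T := mul_comm _ _
    refine le_trans (Finset.sum_le_card_nsmul _ _ (C * T) (fun l _ => hterm l)) ?_
    rw [nsmul_eq_mul, Finset.card_univ, Fintype.card_coe]
    have hcard : (((ball r (0 : Zn n)).card : ℝ)) ≤ (((2*r+1:ℕ):ℝ))^n := by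
      rw [show (((2*r+1:ℕ):ℝ))^n = (((2*r+1)^n : ℕ) : ℝ) by push_cast; ring]
      exact_mod_cast card_ball_le r 0
    exact mul_le_mul_of_nonneg_right hcard (mul_nonneg hC0 hT0)
  refine le_trans (Finset.abs_sum_le_sum_abs _ _) ?_
  refine le_trans (Finset.sum_le_card_nsmul _ _ _ (fun j hj => hinner j hj)) ?_
  rw [nsmul_eq_mul]
  have hcard : (((ball r i).card : ℝ)) ≤ (((2*r+1:ℕ):ℝ))^n := by
    rw [show (((2*r+1:ℕ):ℝ))^n = (((2*r+1)^n : ℕ) : ℝ) by push_cast; ring]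
    exact_mod_cast card_ball_le r i
  calc (((ball r i).card : ℝ)) * ((((2*r+1:ℕ):ℝ))^n * (C * T))
      ≤ (((2*r+1:ℕ):ℝ))^n * ((((2*r+1:ℕ):ℝ))^n * (C * T)) :=
        mul_le_mul_of_nonneg_right hcard (by positivity)
    _ = (C * (((2*r+1:ℕ):ℝ))^n * (((2*r+1:ℕ):ℝ))^n) * T := by ring

lemma grad_sub_ge
    (hloc : ∀ u v : Zn n → ℝ, (∀ k, znorm k ≤ r → u k = v k) → s u = s v)
    (hsm : ContDiff ℝ 2 (sEuc r s)) {C : ℝ}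
    (hS4 : ∀ i k : Zn n, znorm i ≤ r → znorm k ≤ r → ∀ u, |pd2 s i k u| ≤ C)
    (hS3 : ∀ k j : Zn n, znorm k ≤ r → znorm j ≤ r → k ≠ j → ∀ u, pd2 s k j u ≤ 0)
    {p : Fin n → ℕ} (hp : ∀ m, 1 ≤ p m) {x y : Zn n → ℝ} (hper : Periodic p (x - y))
    {i : Zn n} (hi : 0 ≤ (x - y) i) :
    -((C * ((2*r+1:ℕ):ℝ)^n * ((2*r+1:ℕ):ℝ)^n) * ∑ m ∈ Tbox p, max ((x - y) m) 0)
      ≤ grad r s x i - grad r s y i := by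
  obtain ⟨z, hz⟩ := grad_diff_repr hloc hsm x y i
  set T := ∑ m ∈ Tbox p, max ((x - y) m) 0 with hT
  have hT0 : 0 ≤ T :=
    Finset.sum_nonneg fun _ _ => le_max_right _ _
  have hC0 : 0 ≤ C :=
    le_trans (abs_nonneg _) (hS4 0 0 (by simp [znorm]) (by simp [znorm]) 0)
  rw [hz]
  have hterm : ∀ j ∈ ball r i, ∀ l : (ball r (0 : Zn n)),
      -(C * T) ≤ (x - y) (l.1 + j) * pd2 s l.1 (i - j) (shift j z) := by
    intro j hj l
    have hij : znorm (i - j) ≤ r := by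
      rw [znorm_sub_comm]; exact (Finset.mem_filter.mp hj).2
    set a := (x - y) (l.1 + j) with ha
    set c := pd2 s l.1 (i - j) (shift j z) with hc
    have hcabs : |c| ≤ C := hS4 _ _ (mem_ball_zero_iff.mp l.2) hij _
    have hcC : -C ≤ c := neg_le_of_abs_le hcabs
    have hamax : max a 0 ≤ T := per_pos_le hper hp _
    by_cases hli : l.1 + j = i
    · have ha0 : 0 ≤ a := by rw [ha, hli]; exact hi
      have h1 : a * (-C) ≤ a * c := mul_le_mul_of_nonneg_left hcC ha0
      have h2 : a ≤ T := le_trans (le_max_left _ _) hamax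
      nlinarith
    · have hne : l.1 ≠ i - j := by
        intro hcon
        apply hli
        rw [hcon]; abel
      have hc0 : c ≤ 0 := hS3 _ _ (mem_ball_zero_iff.mp l.2) hij hne _
      have h1 : max a 0 * c ≤ a * c :=
        mul_le_mul_of_nonpos_right (le_max_left a 0) hc0
      nlinarith [le_max_right a 0]
  have hinner : ∀ j ∈ ball r i,
      (((2*r+1:ℕ):ℝ))^n * (-(C * T))
        ≤ ∑ l : (ball r (0 : Zn n)), (x - y) (l.1 + j) * pd2 s l.1 (i - j) (shift j z) := by
    intro j hj
    refine le_trans ?_ (Finset.card_nsmul_le_sum _ _ (-(C * T)) (fun l _ => hterm j hj l))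
    rw [nsmul_eq_mul, Finset.card_univ, Fintype.card_coe]
    have hcard : (((ball r (0 : Zn n)).card : ℝ)) ≤ (((2*r+1:ℕ):ℝ))^n := by
      rw [show (((2*r+1:ℕ):ℝ))^n = (((2*r+1)^n : ℕ) : ℝ) by push_cast; ring]
      exact_mod_cast card_ball_le r 0
    have hneg : -(C * T) ≤ 0 := neg_nonpos.mpr (mul_nonneg hC0 hT0)
    exact mul_le_mul_of_nonpos_right hcard hneg
  refine le_trans ?_ (Finset.card_nsmul_le_sum _ _ _ (fun j hj => hinner j hj))
  rw [nsmul_eq_mul]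
  have hcard : (((ball r i).card : ℝ)) ≤ (((2*r+1:ℕ):ℝ))^n := by
    rw [show (((2*r+1:ℕ):ℝ))^n = (((2*r+1)^n : ℕ) : ℝ) by push_cast; ring]
    exact_mod_cast card_ball_le r i
  have hneg : (((2*r+1:ℕ):ℝ))^n * (-(C * T)) ≤ 0 := by
    apply mul_nonpos_of_nonneg_of_nonpos (by positivity)
    exact neg_nonpos.mpr (mul_nonneg hC0 hT0)
  have h2 : (((2*r+1:ℕ):ℝ))^n * ((((2*r+1:ℕ):ℝ))^n * (-(C * T)))
      ≤ (((ball r i).card : ℝ)) * ((((2*r+1:ℕ):ℝ))^n * (-(C * T))) :=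
    mul_le_mul_of_nonpos_right hcard hneg
  refine le_trans (le_of_eq (by ring)) h2

end CalcC
section GronwallAbstract

variable {n : ℕ} {p : Fin n → ℕ}

lemma hasDerivAt_posSq (x : ℝ) : HasDerivAt (fun y : ℝ => max y 0 ^ 2) (2 * max x 0) x := by
  rcases lt_trichotomy x 0 with hx | hx | hx
  · have hev : (fun y : ℝ => max y 0 ^ 2) =ᶠ[nhds x] fun _ => (0:ℝ) := by
      filter_upwards [Iio_mem_nhds hx] with y hy
      rw [max_eq_right (le_of_lt hy)]
      norm_num
    have h0 : HasDerivAt (fun y : ℝ => max y 0 ^ 2) 0 x :=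
      (hasDerivAt_const x (0:ℝ)).congr_of_eventuallyEq hev
    have : (2 : ℝ) * max x 0 = 0 := by rw [max_eq_right (le_of_lt hx)]; ring
    rwa [this]
  · subst hx
    have : (2 : ℝ) * max 0 0 = 0 := by norm_num
    rw [this]
    rw [hasDerivAt_iff_isLittleO]
    have hmain : (fun y : ℝ => max y 0 ^ 2 - max 0 0 ^ 2 - (y - 0) • (0:ℝ))
        = fun y : ℝ => max y 0 ^ 2 := by
      funext y; simp
    rw [hmain]
    rw [Asymptotics.isLittleO_iff]
    intro c hc
    filter_upwards [Metric.ball_mem_nhds (0:ℝ) hc] with y hy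
    rw [Metric.mem_ball, Real.dist_eq, sub_zero] at hy
    have h1 : |max y 0| ≤ |y| := by
      rcases le_or_gt y 0 with h | h
      · rw [max_eq_right h]; simp
      · rw [max_eq_left (le_of_lt h)]
    have h2 : ‖max y 0 ^ 2‖ = |max y 0| * |max y 0| := by
      rw [Real.norm_eq_abs, sq, abs_mul]
    rw [h2]
    calc |max y 0| * |max y 0| ≤ c * |y| := by
          apply mul_le_mul (le_trans h1 (le_of_lt hy)) h1 (abs_nonneg _) (le_of_lt hc)
      _ = c * ‖y - 0‖ := by rw [sub_zero, Real.norm_eq_abs]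
  · have hev : (fun y : ℝ => max y 0 ^ 2) =ᶠ[nhds x] fun y : ℝ => y ^ 2 := by
      filter_upwards [Ioi_mem_nhds hx] with y hy
      rw [max_eq_left (le_of_lt hy)]
    have h0 : HasDerivAt (fun y : ℝ => y ^ 2) (2 * x) x := by
      simpa using hasDerivAt_pow 2 x
    have h1 := h0.congr_of_eventuallyEq hev
    have h2 : (2 : ℝ) * max x 0 = 2 * x := by rw [max_eq_left (le_of_lt hx)]
    rwa [h2]

/-- One-sided Grönwall comparison: a cooperative differential inequality preserves `≤ 0`. -/
lemma gronwall_pos_part (hp : ∀ m, 1 ≤ p m) {F F' : ℝ → Zn n → ℝ} {L : ℝ} (hL : 0 ≤ L)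
    (hper : ∀ t, Periodic p (F t))
    (hd : ∀ (m : Zn n) (t : ℝ), 0 ≤ t →
      HasDerivWithinAt (fun τ => F τ m) (F' t m) (Set.Ici 0) t)
    (hq : ∀ t : ℝ, 0 ≤ t → ∀ m : Zn n, 0 ≤ F t m →
      F' t m ≤ L * ∑ m' ∈ Tbox p, max (F t m') 0)
    {t1 t2 : ℝ} (ht1 : 0 ≤ t1) (h12 : t1 ≤ t2) (hinit : F t1 ≤ 0) : F t2 ≤ 0 := by
  set NT : ℝ := ((Tbox p).card : ℝ) with hNT
  set K : ℝ := 2 * L * NT with hK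
  set φ : ℝ → ℝ := fun t => ∑ m ∈ Tbox p, max (F t m) 0 ^ 2 with hφ
  set φ' : ℝ → ℝ := fun t => ∑ m ∈ Tbox p, 2 * max (F t m) 0 * F' t m with hφ'
  have hder : ∀ t : ℝ, 0 ≤ t → HasDerivWithinAt φ (φ' t) (Set.Ici 0) t := by
    intro t ht
    apply HasDerivWithinAt.fun_sum
    intro m _
    exact (hasDerivAt_posSq (F t m)).comp_hasDerivWithinAt t (hd m t ht)
  have hbound : ∀ t : ℝ, 0 ≤ t → φ' t ≤ K * φ t := by
    intro t ht
    set T := ∑ m' ∈ Tbox p, max (F t m') 0 with hTd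
    have hT0 : 0 ≤ T := Finset.sum_nonneg fun _ _ => le_max_right _ _
    have hterm : ∀ m ∈ Tbox p,
        2 * max (F t m) 0 * F' t m ≤ 2 * L * (max (F t m) 0 * T) := by
      intro m _
      by_cases hm : 0 ≤ F t m
      · have h1 := hq t ht m hm
        calc 2 * max (F t m) 0 * F' t m ≤ 2 * max (F t m) 0 * (L * T) := by
              apply mul_le_mul_of_nonneg_left h1
              have : (0:ℝ) ≤ max (F t m) 0 := le_max_right _ _
              linarith
          _ = 2 * L * (max (F t m) 0 * T) := by ring
      · push_neg at hm
        rw [max_eq_right (le_of_lt hm)]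
        simp
    calc φ' t ≤ ∑ m ∈ Tbox p, 2 * L * (max (F t m) 0 * T) := Finset.sum_le_sum hterm
      _ = 2 * L * (T * T) := by rw [← Finset.mul_sum, ← Finset.sum_mul]
      _ ≤ 2 * L * (NT * φ t) := by
          apply mul_le_mul_of_nonneg_left _ (by linarith)
          have hch := sq_sum_le_card_mul_sum_sq (s := Tbox p) (f := fun m => max (F t m) 0)
          calc T * T = (∑ m ∈ Tbox p, max (F t m) 0) ^ 2 := by rw [sq]
            _ ≤ (Tbox p).card * ∑ m ∈ Tbox p, max (F t m) 0 ^ 2 := hch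
            _ = NT * φ t := by rw [hNT, hφ]
      _ = K * φ t := by rw [hK]; ring
  have hφt1 : φ t1 = 0 := by
    apply Finset.sum_eq_zero
    intro m _
    have h0 : F t1 m ≤ 0 := hinit m
    rw [max_eq_right h0]
    norm_num
  have hG : ∀ t ∈ Set.Icc t1 t2, φ t ≤ gronwallBound 0 K 0 (t - t1) := by
    apply le_gronwallBound_of_liminf_deriv_right_le (f' := φ')
    · exact fun t ht =>
        ((hder t (le_trans ht1 ht.1)).continuousWithinAt).mono fun τ hτ => le_trans ht1 hτ.1
    · intro x hx ρ hρ
      have hdx := (hder x (le_trans ht1 hx.1)).mono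
        (fun τ (hτ : τ ∈ Set.Ici x) => le_trans (le_trans ht1 hx.1) hτ)
      have hfreq := hdx.liminf_right_slope_le hρ
      refine hfreq.mono fun z hz => ?_
      rwa [slope_def_field, div_eq_inv_mul] at hz
    · rw [hφt1]
    · intro x hx
      have := hbound x (le_trans ht1 hx.1)
      linarith
  have hφt2 : φ t2 = 0 := by
    have h1 := hG t2 ⟨h12, le_refl t2⟩
    rw [gronwallBound_ε0_δ0] at h1
    have h2 : 0 ≤ φ t2 := Finset.sum_nonneg fun _ _ => sq_nonneg _
    linarith
  have hbox : ∀ m ∈ Tbox p, F t2 m ≤ 0 := by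
    intro m hm
    have h1 := (Finset.sum_eq_zero_iff_of_nonneg (fun m _ => sq_nonneg _)).mp hφt2 m hm
    have h2 : max (F t2 m) 0 = 0 := by
      have := sq_eq_zero_iff.mp h1
      exact this
    rcases le_or_gt (F t2 m) 0 with h | h
    · exact h
    · exfalso
      rw [max_eq_left (le_of_lt h)] at h2
      linarith
  intro l
  have hl := periodic_modv (hper t2) l
  have := hbox (modv p l) (modv_mem_Tbox hp l)
  rw [hl] at this
  exact this

/-- Two-sided Grönwall: equality with an equilibrium propagates forward and backward. -/
lemma gronwall_sq (hp : ∀ m, 1 ≤ p m) {F F' : ℝ → Zn n → ℝ} {L : ℝ} (hL : 0 ≤ L)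
    (hper : ∀ t, Periodic p (F t))
    (hd : ∀ (m : Zn n) (t : ℝ), 0 ≤ t →
      HasDerivWithinAt (fun τ => F τ m) (F' t m) (Set.Ici 0) t)
    (habs : ∀ t : ℝ, 0 ≤ t → ∀ m : Zn n,
      |F' t m| ≤ L * ∑ m' ∈ Tbox p, |F t m'|)
    {t1 t2 : ℝ} (ht1 : 0 ≤ t1) (h12 : t1 ≤ t2) :
    (F t1 = 0 → F t2 = 0) ∧ (F t2 = 0 → F t1 = 0) := by
  set NT : ℝ := ((Tbox p).card : ℝ) with hNT
  set K : ℝ := 2 * L * NT with hK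
  set ψ : ℝ → ℝ := fun t => ∑ m ∈ Tbox p, F t m ^ 2 with hψ
  set ψ' : ℝ → ℝ := fun t => ∑ m ∈ Tbox p, 2 * F t m * F' t m with hψ'
  have hψ0 : ∀ t, 0 ≤ ψ t := fun t => Finset.sum_nonneg fun _ _ => sq_nonneg _
  have hder : ∀ t : ℝ, 0 ≤ t → HasDerivWithinAt ψ (ψ' t) (Set.Ici 0) t := by
    intro t ht
    apply HasDerivWithinAt.fun_sum
    intro m _
    have h1 := (hd m t ht).fun_pow 2
    refine h1.congr_deriv ?_
    norm_num
  have hbound : ∀ t : ℝ, 0 ≤ t → |ψ' t| ≤ K * ψ t := by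
    intro t ht
    set T := ∑ m' ∈ Tbox p, |F t m'| with hTd
    have hT0 : 0 ≤ T := Finset.sum_nonneg fun _ _ => abs_nonneg _
    have hterm : ∀ m ∈ Tbox p, |2 * F t m * F' t m| ≤ 2 * L * (|F t m| * T) := by
      intro m _
      calc |2 * F t m * F' t m| = 2 * (|F t m| * |F' t m|) := by
            rw [abs_mul, abs_mul, abs_two, mul_assoc]
        _ ≤ 2 * (|F t m| * (L * T)) := by
            apply mul_le_mul_of_nonneg_left _ (by norm_num)
            exact mul_le_mul_of_nonneg_left (habs t ht m) (abs_nonneg _)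
        _ = 2 * L * (|F t m| * T) := by ring
    calc |ψ' t| ≤ ∑ m ∈ Tbox p, |2 * F t m * F' t m| := Finset.abs_sum_le_sum_abs _ _
      _ ≤ ∑ m ∈ Tbox p, 2 * L * (|F t m| * T) := Finset.sum_le_sum hterm
      _ = 2 * L * (T * T) := by rw [← Finset.mul_sum, ← Finset.sum_mul]
      _ ≤ 2 * L * (NT * ψ t) := by
          apply mul_le_mul_of_nonneg_left _ (by linarith)
          have hch := sq_sum_le_card_mul_sum_sq (s := Tbox p) (f := fun m => |F t m|)
          calc T * T = (∑ m ∈ Tbox p, |F t m|) ^ 2 := by rw [sq]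
            _ ≤ (Tbox p).card * ∑ m ∈ Tbox p, |F t m| ^ 2 := hch
            _ = NT * ψ t := by
                rw [hNT, hψ]
                congr 1
                exact Finset.sum_congr rfl fun m _ => by rw [sq_abs]
      _ = K * ψ t := by rw [hK]; ring
  have zero_of : ∀ {t : ℝ}, 0 ≤ t → ψ t = 0 → F t = 0 := by
    intro t ht h0
    funext l
    have hbox : ∀ m ∈ Tbox p, F t m = 0 := fun m hm =>
      sq_eq_zero_iff.mp ((Finset.sum_eq_zero_iff_of_nonneg (fun m _ => sq_nonneg _)).mp h0 m hm)
    have hl := periodic_modv (hper t) l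
    show F t l = 0
    rw [← hl]
    exact hbox _ (modv_mem_Tbox hp l)
  have of_zero : ∀ {t : ℝ}, F t = 0 → ψ t = 0 := by
    intro t h0
    apply Finset.sum_eq_zero
    intro m _
    have : F t m = 0 := by rw [h0]; rfl
    rw [this]
    norm_num
  have hcψ : ContinuousOn ψ (Set.Icc t1 t2) := fun t ht =>
    ((hder t (le_trans ht1 ht.1)).continuousWithinAt).mono fun τ hτ => le_trans ht1 hτ.1
  constructor
  · intro h1
    have hGr := norm_le_gronwallBound_of_norm_deriv_right_le (f := ψ) (f' := ψ')
      (δ := 0) (K := K) (ε := 0) (a := t1) (b := t2)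
      hcψ
      (fun t ht => (hder t (le_trans ht1 ht.1)).mono
        fun τ (hτ : τ ∈ Set.Ici t) => le_trans (le_trans ht1 ht.1) hτ)
      (by rw [Real.norm_eq_abs, of_zero h1, abs_zero])
      (fun t ht => by
        rw [Real.norm_eq_abs, Real.norm_eq_abs, abs_of_nonneg (hψ0 t), add_zero]
        exact hbound t (le_trans ht1 ht.1))
      t2 ⟨h12, le_refl t2⟩
    rw [gronwallBound_ε0_δ0, Real.norm_eq_abs, abs_of_nonneg (hψ0 t2)] at hGr
    exact zero_of (le_trans ht1 h12) (le_antisymm hGr (hψ0 t2))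
  · intro h2
    set f : ℝ → ℝ := fun τ => ψ (t1 + t2 - τ) with hf
    have hd2 : ∀ τ ∈ Set.Ico t1 t2,
        HasDerivWithinAt f (ψ' (t1 + t2 - τ) * (-1)) (Set.Ici τ) τ := by
      intro τ hτ
      have hσ : (0:ℝ) ≤ t1 + t2 - τ := by
        have := hτ.2
        linarith
      have hρ : HasDerivWithinAt (fun τ' : ℝ => t1 + t2 - τ') (-1) (Set.Icc τ (t1 + t2)) τ :=
        ((hasDerivAt_id τ).const_sub (t1 + t2)).hasDerivWithinAt
      have hmaps : Set.MapsTo (fun τ' : ℝ => t1 + t2 - τ')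
          (Set.Icc τ (t1 + t2)) (Set.Ici 0) := by
        intro τ' hτ'
        simp only [Set.mem_Ici]
        have := hτ'.2
        linarith
      have hcomp := (hder (t1 + t2 - τ) hσ).comp τ hρ hmaps
      have hlt : τ < t1 + t2 := by
        have := hτ.2
        linarith
      rw [← Set.Ici_inter_Iic] at hcomp
      exact (hasDerivWithinAt_inter (Iic_mem_nhds hlt)).mp hcomp
    have hmaps2 : Set.MapsTo (fun τ : ℝ => t1 + t2 - τ) (Set.Icc t1 t2) (Set.Icc t1 t2) := by
      intro τ hτ
      refine ⟨?_, ?_⟩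
      · have h := hτ.2
        show t1 ≤ t1 + t2 - τ
        linarith
      · have h := hτ.1
        show t1 + t2 - τ ≤ t2
        linarith
    have hcf : ContinuousOn f (Set.Icc t1 t2) :=
      hcψ.comp ((continuous_const.sub continuous_id).continuousOn) hmaps2
    have ht1eq : t1 + t2 - t1 = t2 := by ring
    have ht2eq : t1 + t2 - t2 = t1 := by ring
    have hGr := norm_le_gronwallBound_of_norm_deriv_right_le (f := f)
      (f' := fun τ => ψ' (t1 + t2 - τ) * (-1))
      (δ := 0) (K := K) (ε := 0) (a := t1) (b := t2)
      hcf hd2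
      (by
        show ‖ψ (t1 + t2 - t1)‖ ≤ 0
        rw [ht1eq, Real.norm_eq_abs, of_zero h2, abs_zero])
      (fun τ hτ => by
        have hσ : (0:ℝ) ≤ t1 + t2 - τ := by
          have := hτ.2; linarith
        show ‖ψ' (t1 + t2 - τ) * (-1)‖ ≤ K * ‖ψ (t1 + t2 - τ)‖ + 0
        rw [Real.norm_eq_abs, Real.norm_eq_abs, abs_mul, abs_neg, abs_one, mul_one,
          abs_of_nonneg (hψ0 _), add_zero]
        exact hbound _ hσ)
      t2 ⟨h12, le_refl t2⟩
    have : ‖ψ t1‖ ≤ gronwallBound 0 K 0 (t2 - t1) := by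
      have : f t2 = ψ t1 := by rw [hf]; simp only []; rw [ht2eq]
      rwa [this] at hGr
    rw [gronwallBound_ε0_δ0, Real.norm_eq_abs, abs_of_nonneg (hψ0 t1)] at this
    exact zero_of ht1 (le_antisymm this (hψ0 t1))

end GronwallAbstract
section FlowLemmas

variable {n r : ℕ} {s : (Zn n → ℝ) → ℝ} {C : ℝ} {p : Fin n → ℕ} {v0 u0 : Zn n → ℝ}
  {Φ : ℝ → (Zn n → ℝ) → (Zn n → ℝ)}

lemma flow_le
    (hloc : ∀ u v : Zn n → ℝ, (∀ k, znorm k ≤ r → u k = v k) → s u = s v)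
    (hsm : ContDiff ℝ 2 (sEuc r s))
    (hS4 : ∀ i k : Zn n, znorm i ≤ r → znorm k ≤ r → ∀ u, |pd2 s i k u| ≤ C)
    (hS3 : ∀ k j : Zn n, znorm k ≤ r → znorm j ≤ r → k ≠ j → ∀ u, pd2 s k j u ≤ 0)
    (hp : ∀ m, 1 ≤ p m) (hu0per : Periodic p u0)
    (hu0sol : ∀ i, grad r s (u0 + v0) i = 0) (hΦ : IsFlow r s p v0 Φ)
    {u : Zn n → ℝ} (hu : Periodic p u) {t1 t2 : ℝ} (ht1 : 0 ≤ t1) (h12 : t1 ≤ t2)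
    (hinit : Φ t1 u ≤ u0) : Φ t2 u ≤ u0 := by
  have hC0 : 0 ≤ C :=
    le_trans (abs_nonneg _) (hS4 0 0 (by simp [znorm]) (by simp [znorm]) 0)
  set L : ℝ := C * ((2*r+1:ℕ):ℝ)^n * ((2*r+1:ℕ):ℝ)^n with hL
  have hL0 : 0 ≤ L := by positivity
  have key := gronwall_pos_part hp (F := fun t => Φ t u - u0)
    (F' := fun t m => -(grad r s (Φ t u + v0) m)) hL0
    (fun t => Periodic.sub' (hΦ.1 u hu t) hu0per)
    (fun m t ht => by
      have h1 := hΦ.2.2 u hu m t (Set.mem_Ici.mpr ht)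
      exact h1.sub_const (u0 m))
    (fun t ht m hm => by
      have hxy : (Φ t u + v0) - (u0 + v0) = Φ t u - u0 := by abel
      have hperw : Periodic p ((Φ t u + v0) - (u0 + v0)) := by
        rw [hxy]
        exact Periodic.sub' (hΦ.1 u hu t) hu0per
      have hi' : 0 ≤ ((Φ t u + v0) - (u0 + v0)) m := by rw [hxy]; exact hm
      have key := grad_sub_ge hloc hsm hS4 hS3 hp hperw hi'
      rw [hxy, hu0sol m, sub_zero] at key
      have : -(grad r s (Φ t u + v0) m) ≤ L * ∑ m' ∈ Tbox p, max ((Φ t u - u0) m') 0 := by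
        rw [hL]
        linarith
      exact this)
    ht1 h12 (sub_nonpos.mpr hinit)
  exact sub_nonpos.mp key

lemma flow_ge
    (hloc : ∀ u v : Zn n → ℝ, (∀ k, znorm k ≤ r → u k = v k) → s u = s v)
    (hsm : ContDiff ℝ 2 (sEuc r s))
    (hS4 : ∀ i k : Zn n, znorm i ≤ r → znorm k ≤ r → ∀ u, |pd2 s i k u| ≤ C)
    (hS3 : ∀ k j : Zn n, znorm k ≤ r → znorm j ≤ r → k ≠ j → ∀ u, pd2 s k j u ≤ 0)
    (hp : ∀ m, 1 ≤ p m) (hu0per : Periodic p u0)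
    (hu0sol : ∀ i, grad r s (u0 + v0) i = 0) (hΦ : IsFlow r s p v0 Φ)
    {u : Zn n → ℝ} (hu : Periodic p u) {t1 t2 : ℝ} (ht1 : 0 ≤ t1) (h12 : t1 ≤ t2)
    (hinit : u0 ≤ Φ t1 u) : u0 ≤ Φ t2 u := by
  have hC0 : 0 ≤ C :=
    le_trans (abs_nonneg _) (hS4 0 0 (by simp [znorm]) (by simp [znorm]) 0)
  set L : ℝ := C * ((2*r+1:ℕ):ℝ)^n * ((2*r+1:ℕ):ℝ)^n with hL
  have hL0 : 0 ≤ L := by positivity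
  have key := gronwall_pos_part hp (F := fun t => u0 - Φ t u)
    (F' := fun t m => grad r s (Φ t u + v0) m) hL0
    (fun t => Periodic.sub' hu0per (hΦ.1 u hu t))
    (fun m t ht => by
      have h1 := hΦ.2.2 u hu m t (Set.mem_Ici.mpr ht)
      have h2 := h1.const_sub (u0 m)
      simpa using h2)
    (fun t ht m hm => by
      have hxy : (u0 + v0) - (Φ t u + v0) = u0 - Φ t u := by abel
      have hperw : Periodic p ((u0 + v0) - (Φ t u + v0)) := by
        rw [hxy]
        exact Periodic.sub' hu0per (hΦ.1 u hu t)
      have hi' : 0 ≤ ((u0 + v0) - (Φ t u + v0)) m := by rw [hxy]; exact hm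
      have key := grad_sub_ge hloc hsm hS4 hS3 hp hperw hi'
      rw [hxy, hu0sol m, zero_sub] at key
      have : grad r s (Φ t u + v0) m ≤ L * ∑ m' ∈ Tbox p, max ((u0 - Φ t u) m') 0 := by
        rw [hL]
        linarith
      exact this)
    ht1 h12 (sub_nonpos.mpr hinit)
  exact sub_nonpos.mp key

lemma flow_eq
    (hloc : ∀ u v : Zn n → ℝ, (∀ k, znorm k ≤ r → u k = v k) → s u = s v)
    (hsm : ContDiff ℝ 2 (sEuc r s))
    (hS4 : ∀ i k : Zn n, znorm i ≤ r → znorm k ≤ r → ∀ u, |pd2 s i k u| ≤ C)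
    (hp : ∀ m, 1 ≤ p m) (hu0per : Periodic p u0)
    (hu0sol : ∀ i, grad r s (u0 + v0) i = 0) (hΦ : IsFlow r s p v0 Φ)
    {u : Zn n → ℝ} (hu : Periodic p u) {t1 t2 : ℝ} (ht1 : 0 ≤ t1) (h12 : t1 ≤ t2) :
    (Φ t1 u = u0 → Φ t2 u = u0) ∧ (Φ t2 u = u0 → Φ t1 u = u0) := by
  have hC0 : 0 ≤ C :=
    le_trans (abs_nonneg _) (hS4 0 0 (by simp [znorm]) (by simp [znorm]) 0)
  set L : ℝ := C * ((2*r+1:ℕ):ℝ)^n * ((2*r+1:ℕ):ℝ)^n with hL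
  have hL0 : 0 ≤ L := by positivity
  have key := gronwall_sq hp (F := fun t => Φ t u - u0)
    (F' := fun t m => -(grad r s (Φ t u + v0) m)) hL0
    (fun t => Periodic.sub' (hΦ.1 u hu t) hu0per)
    (fun m t ht => by
      have h1 := hΦ.2.2 u hu m t (Set.mem_Ici.mpr ht)
      exact h1.sub_const (u0 m))
    (fun t ht m => by
      have hxy : (Φ t u + v0) - (u0 + v0) = Φ t u - u0 := by abel
      have hperw : Periodic p ((Φ t u + v0) - (u0 + v0)) := by
        rw [hxy]
        exact Periodic.sub' (hΦ.1 u hu t) hu0per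
      have key := grad_sub_abs_le hloc hsm hS4 hp hperw m
      rw [hxy, hu0sol m, sub_zero] at key
      rw [abs_neg]
      rw [hL]
      exact key)
    ht1 h12
  constructor
  · intro h1
    have h0 : Φ t1 u - u0 = 0 := by rw [h1, sub_self]
    have h2 : Φ t2 u - u0 = 0 := key.1 h0
    exact sub_eq_zero.mp h2
  · intro h1
    have h0 : Φ t2 u - u0 = 0 := by rw [h1, sub_self]
    have h2 : Φ t1 u - u0 = 0 := key.2 h0
    exact sub_eq_zero.mp h2

end FlowLemmas
/-- monotonicity of `θ̲_t` and `θ̄_t`: (1) if `h(θ) ≠ u₀` for all `θ ∈ [0,1]`, then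
`t ↦ θ̲_t` is nondecreasing and `t ↦ θ̄_t` is nonincreasing on `(0,∞)`; (2) if `h(θ₀) = u₀` for a
unique `θ₀ ∈ (0,1)` then `θ̲_t = θ₀ = θ̄_t` for all `t > 0`, and if `h(θ) = u₀` exactly for `θ` in
a maximal interval `[a,b] ⊂ (0,1)` then `θ̲_t = a` and `θ̄_t = b` for all `t > 0`. -/
theorem statement12 {n r : ℕ} (P : Setup n r) (v0 w0 : Zn n → ℝ)
    (hv0 : v0 ∈ M0 P.s) (hw0 : w0 ∈ M0 P.s) (hlt : ∀ i, v0 i < w0 i)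
    (hadj : ∀ u ∈ M0 P.s, u ≠ v0 → u ≠ w0 → ¬(v0 ≤ u ∧ u ≤ w0))
    (k : ℕ) (hk : 1 ≤ k)
    (u0 : Zn n → ℝ) (hu0per : PeriodicAll u0)
    (hu0b : ∀ i, 0 < u0 i ∧ u0 i < w0 i - v0 i)
    (hu0sol : IsSolution r P.s (u0 + v0))
    (Φ : ℝ → (Zn n → ℝ) → (Zn n → ℝ)) (hΦ : IsFlow r P.s (pk n k) v0 Φ)
    (h : ℝ → Zn n → ℝ) (hpath : PathIn (pk n k) v0 w0 h)
    (hmono : ∀ θ1 θ2 : ℝ, θ2 < θ1 → h θ2 ≤ h θ1) :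
    ((∀ θ ∈ Set.Icc (0 : ℝ) 1, h θ ≠ u0) →
      ∀ t1 t2 : ℝ, 0 < t1 → t1 ≤ t2 →
        thetaLow Φ h u0 t1 ≤ thetaLow Φ h u0 t2 ∧
        thetaHigh Φ h u0 t2 ≤ thetaHigh Φ h u0 t1) ∧
    (∀ θ0 ∈ Set.Ioo (0 : ℝ) 1, h θ0 = u0 →
      (∀ θ ∈ Set.Ioo (0 : ℝ) 1, h θ = u0 → θ = θ0) →
      ∀ t : ℝ, 0 < t → thetaLow Φ h u0 t = θ0 ∧ thetaHigh Φ h u0 t = θ0) ∧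
    (∀ a b : ℝ, 0 < a → a ≤ b → b < 1 →
      (∀ θ ∈ Set.Icc (0 : ℝ) 1, h θ = u0 ↔ θ ∈ Set.Icc a b) →
      ∀ t : ℝ, 0 < t → thetaLow Φ h u0 t = a ∧ thetaHigh Φ h u0 t = b) := by
  obtain ⟨hpath1, hpathG, hpath0, hpathOne⟩ := hpath
  have hp : ∀ m, 1 ≤ pk n k m := by
    intro m
    unfold pk
    split <;> omega
  have hloc := P.localized
  have hsm := P.smooth
  have hS3 := P.S3
  have hS4 := P.S4
  have hu0p : Periodic (pk n k) u0 := periodicAll_to hu0per _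
  have hsol : ∀ i, grad r P.s (u0 + v0) i = 0 := hu0sol
  have hper : ∀ θ ∈ Set.Icc (0:ℝ) 1, Periodic (pk n k) (h θ) := fun θ hθ => (hpathG θ hθ).1
  have hΦ0' : ∀ u, Φ 0 u = u := hΦ.2.1
  have h0neq : (0 : Zn n → ℝ) ≠ u0 := by
    intro hc
    have h1 := (hu0b 0).1
    rw [← hc] at h1
    exact lt_irrefl _ h1
  have h0le : (0 : Zn n → ℝ) ≤ u0 := Pi.le_def.mpr fun i => le_of_lt (hu0b i).1
  have h1ge : u0 ≤ w0 - v0 := Pi.le_def.mpr fun i => le_of_lt (hu0b i).2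
  have h1neq : w0 - v0 ≠ u0 := by
    intro hc
    have h2 := (hu0b 0).2
    rw [← hc] at h2
    exact lt_irrefl _ h2
  have persist_le : ∀ θ ∈ Set.Icc (0:ℝ) 1, ∀ t1 t2 : ℝ, 0 ≤ t1 → t1 ≤ t2 →
      (Φ t1 (h θ) ≤ u0 ∧ Φ t1 (h θ) ≠ u0) → (Φ t2 (h θ) ≤ u0 ∧ Φ t2 (h θ) ≠ u0) := by
    rintro θ hθ t1 t2 ht1 h12 ⟨hle, hne⟩
    refine ⟨flow_le hloc hsm hS4 hS3 hp hu0p hsol hΦ (hper θ hθ) ht1 h12 hle, ?_⟩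
    intro hc
    exact hne ((flow_eq hloc hsm hS4 hp hu0p hsol hΦ (hper θ hθ) ht1 h12).2 hc)
  have persist_ge : ∀ θ ∈ Set.Icc (0:ℝ) 1, ∀ t1 t2 : ℝ, 0 ≤ t1 → t1 ≤ t2 →
      (u0 ≤ Φ t1 (h θ) ∧ Φ t1 (h θ) ≠ u0) → (u0 ≤ Φ t2 (h θ) ∧ Φ t2 (h θ) ≠ u0) := by
    rintro θ hθ t1 t2 ht1 h12 ⟨hle, hne⟩
    refine ⟨flow_ge hloc hsm hS4 hS3 hp hu0p hsol hΦ (hper θ hθ) ht1 h12 hle, ?_⟩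
    intro hc
    exact hne ((flow_eq hloc hsm hS4 hp hu0p hsol hΦ (hper θ hθ) ht1 h12).2 hc)
  have station : ∀ θ ∈ Set.Icc (0:ℝ) 1, h θ = u0 → ∀ t : ℝ, 0 ≤ t → Φ t (h θ) = u0 := by
    intro θ hθ hval t ht
    exact (flow_eq hloc hsm hS4 hp hu0p hsol hΦ (hper θ hθ) le_rfl ht).1
      (by rw [hΦ0', hval])
  have mem0 : ∀ t : ℝ, 0 ≤ t →
      (0:ℝ) ∈ {θ | θ ∈ Set.Icc (0:ℝ) 1 ∧ Φ t (h θ) ≤ u0 ∧ Φ t (h θ) ≠ u0} := by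
    intro t ht
    refine ⟨⟨le_refl 0, zero_le_one⟩, ?_⟩
    refine persist_le 0 ⟨le_refl 0, zero_le_one⟩ 0 t le_rfl ht ⟨?_, ?_⟩
    · rw [hΦ0', hpath0]; exact h0le
    · rw [hΦ0', hpath0]; exact h0neq
  have mem1 : ∀ t : ℝ, 0 ≤ t →
      (1:ℝ) ∈ {θ | θ ∈ Set.Icc (0:ℝ) 1 ∧ u0 ≤ Φ t (h θ) ∧ Φ t (h θ) ≠ u0} := by
    intro t ht
    refine ⟨⟨zero_le_one, le_refl 1⟩, ?_⟩
    refine persist_ge 1 ⟨zero_le_one, le_refl 1⟩ 0 t le_rfl ht ⟨?_, ?_⟩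
    · rw [hΦ0', hpathOne]; exact h1ge
    · rw [hΦ0', hpathOne]; exact h1neq
  have bddA : ∀ t : ℝ,
      BddAbove {θ | θ ∈ Set.Icc (0:ℝ) 1 ∧ Φ t (h θ) ≤ u0 ∧ Φ t (h θ) ≠ u0} :=
    fun t => ⟨1, fun θ hθ => hθ.1.2⟩
  have bddB : ∀ t : ℝ,
      BddBelow {θ | θ ∈ Set.Icc (0:ℝ) 1 ∧ u0 ≤ Φ t (h θ) ∧ Φ t (h θ) ≠ u0} :=
    fun t => ⟨0, fun θ hθ => hθ.1.1⟩
  have master : ∀ a b : ℝ, 0 < a → a ≤ b → b < 1 →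
      (∀ θ ∈ Set.Icc (0:ℝ) 1, (h θ = u0 ↔ θ ∈ Set.Icc a b)) →
      ∀ t : ℝ, 0 < t → thetaLow Φ h u0 t = a ∧ thetaHigh Φ h u0 t = b := by
    intro a b ha hab hb1 hiff t ht
    have ha1 : a < 1 := lt_of_le_of_lt hab hb1
    have hb0 : 0 < b := lt_of_lt_of_le ha hab
    have hha : h a = u0 := (hiff a ⟨ha.le, ha1.le⟩).mpr ⟨le_rfl, hab⟩
    have hhb : h b = u0 := (hiff b ⟨hb0.le, hb1.le⟩).mpr ⟨hab, le_rfl⟩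
    constructor
    · -- thetaLow = a
      unfold thetaLow
      have hub : ∀ θ ∈ {θ | θ ∈ Set.Icc (0:ℝ) 1 ∧ Φ t (h θ) ≤ u0 ∧ Φ t (h θ) ≠ u0},
          θ ≤ a := by
        intro θ hθ
        by_contra hgt
        push_neg at hgt
        rcases le_or_gt θ b with hθb | hbθ
        · have hval : h θ = u0 := (hiff θ hθ.1).mpr ⟨hgt.le, hθb⟩
          exact hθ.2.2 (station θ hθ.1 hval t ht.le)
        · have hub0 : u0 ≤ h θ := by
            have := hmono θ b hbθ
            rwa [hhb] at this
          have hne : h θ ≠ u0 := by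
            intro hc
            exact (not_le.mpr hbθ) ((hiff θ hθ.1).mp hc).2
          have hge := persist_ge θ hθ.1 0 t le_rfl ht.le
            ⟨by rw [hΦ0']; exact hub0, by rw [hΦ0']; exact hne⟩
          exact hθ.2.2 (le_antisymm hθ.2.1 hge.1)
      have hincl : Set.Ico (0:ℝ) a ⊆
          {θ | θ ∈ Set.Icc (0:ℝ) 1 ∧ Φ t (h θ) ≤ u0 ∧ Φ t (h θ) ≠ u0} := by
        intro θ hθ
        have hθI : θ ∈ Set.Icc (0:ℝ) 1 := ⟨hθ.1, le_trans hθ.2.le ha1.le⟩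
        have hle0 : h θ ≤ u0 := by
          have := hmono a θ hθ.2
          rwa [hha] at this
        have hne : h θ ≠ u0 := by
          intro hc
          exact (not_le.mpr hθ.2) ((hiff θ hθI).mp hc).1
        exact ⟨hθI, persist_le θ hθI 0 t le_rfl ht.le
          ⟨by rw [hΦ0']; exact hle0, by rw [hΦ0']; exact hne⟩⟩
      have hne0 : ({θ | θ ∈ Set.Icc (0:ℝ) 1 ∧ Φ t (h θ) ≤ u0 ∧ Φ t (h θ) ≠ u0}).Nonempty :=
        ⟨0, hincl ⟨le_refl 0, ha⟩⟩
      refine le_antisymm (csSup_le hne0 hub) ?_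
      have h2 := csSup_le_csSup (s := Set.Ico 0 a) (bddA t) ⟨0, ⟨le_refl 0, ha⟩⟩ hincl
      rwa [csSup_Ico ha] at h2
    · -- thetaHigh = b
      unfold thetaHigh
      have hlb : ∀ θ ∈ {θ | θ ∈ Set.Icc (0:ℝ) 1 ∧ u0 ≤ Φ t (h θ) ∧ Φ t (h θ) ≠ u0},
          b ≤ θ := by
        intro θ hθ
        by_contra hgt
        push_neg at hgt
        rcases le_or_gt a θ with haθ | hθa
        · have hval : h θ = u0 := (hiff θ hθ.1).mpr ⟨haθ, hgt.le⟩
          exact hθ.2.2 (station θ hθ.1 hval t ht.le)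
        · have hle0 : h θ ≤ u0 := by
            have := hmono a θ hθa
            rwa [hha] at this
          have hne : h θ ≠ u0 := by
            intro hc
            exact (not_le.mpr hθa) ((hiff θ hθ.1).mp hc).1
          have hle := persist_le θ hθ.1 0 t le_rfl ht.le
            ⟨by rw [hΦ0']; exact hle0, by rw [hΦ0']; exact hne⟩
          exact hθ.2.2 (le_antisymm hle.1 hθ.2.1)
      have hincl : Set.Ioc b 1 ⊆
          {θ | θ ∈ Set.Icc (0:ℝ) 1 ∧ u0 ≤ Φ t (h θ) ∧ Φ t (h θ) ≠ u0} := by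
        intro θ hθ
        have hθI : θ ∈ Set.Icc (0:ℝ) 1 := ⟨le_trans hb0.le hθ.1.le, hθ.2⟩
        have hge0 : u0 ≤ h θ := by
          have := hmono θ b hθ.1
          rwa [hhb] at this
        have hne : h θ ≠ u0 := by
          intro hc
          exact (not_le.mpr hθ.1) ((hiff θ hθI).mp hc).2
        exact ⟨hθI, persist_ge θ hθI 0 t le_rfl ht.le
          ⟨by rw [hΦ0']; exact hge0, by rw [hΦ0']; exact hne⟩⟩
      have hne0 : ({θ | θ ∈ Set.Icc (0:ℝ) 1 ∧ u0 ≤ Φ t (h θ) ∧ Φ t (h θ) ≠ u0}).Nonempty :=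
        ⟨1, hincl ⟨hb1, le_refl 1⟩⟩
      refine le_antisymm ?_ (le_csInf hne0 hlb)
      have h2 := csInf_le_csInf (s := Set.Ioc b 1) (bddB t) ⟨1, ⟨hb1, le_refl 1⟩⟩ hincl
      rwa [csInf_Ioc hb1] at h2
  refine ⟨?_, ?_, ?_⟩
  · -- part 1
    intro _ t1 t2 ht1 h12
    constructor
    · unfold thetaLow
      refine csSup_le_csSup (bddA t2) ⟨0, mem0 t1 ht1.le⟩ ?_
      intro θ hθ
      exact ⟨hθ.1, persist_le θ hθ.1 t1 t2 ht1.le h12 hθ.2⟩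
    · unfold thetaHigh
      refine csInf_le_csInf (bddB t2) ⟨1, mem1 t1 ht1.le⟩ ?_
      intro θ hθ
      exact ⟨hθ.1, persist_ge θ hθ.1 t1 t2 ht1.le h12 hθ.2⟩
  · -- part 2
    intro θ0 hθ0 hval huniq t ht
    refine master θ0 θ0 hθ0.1 le_rfl hθ0.2 ?_ t ht
    intro θ hθ
    constructor
    · intro hc
      rcases eq_or_lt_of_le hθ.1 with h0θ | h0θ
      · exfalso
        rw [← h0θ, hpath0] at hc
        exact h0neq hc
      rcases eq_or_lt_of_le hθ.2 with hθ1 | hθ1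
      · exfalso
        rw [hθ1, hpathOne] at hc
        exact h1neq hc
      have := huniq θ ⟨h0θ, hθ1⟩ hc
      rw [this]
      exact ⟨le_rfl, le_rfl⟩
    · intro hmem
      have hθeq : θ = θ0 := le_antisymm hmem.2 hmem.1
      rw [hθeq]
      exact hval
  · -- part 3
    intro a b ha hab hb1 hiff t ht
    exact master a b ha hab hb1 hiff t ht


end

end FK
end
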